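/- Strengthened crystallization: Let M ⊆ F be generated in degrees ≤ a and let r be an integer such that β_{1,d+1}((in_{(ω,ε)}(M))_{⟨a⟩}) = 0 for all d > a + r. If in_{(ω,ε)}(M) has no minimal generators in degrees a+1, …, a+1+r, then in_{(ω,ε)}(M) is generated in degrees ≤ a. -/

import Mathlib

/-!  Basic setup: the polynomial ring `A = K[X_1,…,X_n]`, a graded free module
`F = ⊕_{j} A(-d_j)` realized as `Fin k → A`, weight orders `(ω, ε)`, initial
modules, Hilbert functions, graded free resolutions, Betti numbers,
regularity and componentwise notions, following Caviglia–Varbaro,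
"Componentwise regularity (I)". -/

namespace CregPaper

abbrev A (K : Type*) [Field K] (n : ℕ) := MvPolynomial (Fin n) K

variable {K : Type*} [Field K] {n k : ℕ}

/-- `(ω)`-weight of an exponent vector `u`. -/
def wdeg (ω : Fin n → ℕ) (u : Fin n →₀ ℕ) : ℕ := u.sum fun i e => ω i * e

/-- total (standard) degree of an exponent vector `u`. -/
def tdeg (u : Fin n →₀ ℕ) : ℕ := u.sum fun _ e => e

/-- largest `(ω,ε)`-weight of a monomial in the support of `f ∈ F`. -/
noncomputable def maxWt (ω : Fin n → ℕ) (ε : Fin k → ℕ) (f : Fin k → A K n) : ℕ :=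
  Finset.univ.sup fun j => (f j).support.sup fun u => wdeg ω u + ε j

/-- the initial part `in_{(ω,ε)}(f)`: the sum of the terms of `f` of largest weight. -/
noncomputable def inForm (ω : Fin n → ℕ) (ε : Fin k → ℕ) (f : Fin k → A K n) :
    Fin k → A K n :=
  fun j => ∑ u ∈ (f j).support.filter fun u => wdeg ω u + ε j = maxWt ω ε f,
    MvPolynomial.monomial u ((f j).coeff u)

/-- the initial module `in_{(ω,ε)}(M)`. -/
noncomputable def inMod (ω : Fin n → ℕ) (ε : Fin k → ℕ)
    (M : Submodule (A K n) (Fin k → A K n)) : Submodule (A K n) (Fin k → A K n) :=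
  Submodule.span (A K n) {g | ∃ f ∈ M, f ≠ 0 ∧ g = inForm ω ε f}

/-- `f ∈ F = ⊕_j A(-d_j)` is homogeneous of (standard) degree `a`. -/
def IsHomog (d : Fin k → ℕ) (a : ℕ) (f : Fin k → A K n) : Prop :=
  ∀ j, ∀ u ∈ (f j).support, tdeg u + d j = a

/-- the `K`-subspace of `F` of homogeneous elements of degree `a`. -/
noncomputable def homogSub (d : Fin k → ℕ) (a : ℕ) : Submodule K (Fin k → A K n) where
  carrier := {f | IsHomog d a f}
  add_mem' := by
    intro f g hf hg j u hu
    rcases Finset.mem_union.mp (MvPolynomial.support_add hu) with h | h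
    · exact hf j u h
    · exact hg j u h
  zero_mem' := by intro j u hu; simp at hu
  smul_mem' := by
    intro c f hf j u hu
    exact hf j u (MvPolynomial.support_smul hu)

/-- the degree-`a` homogeneous component of `f ∈ F`. -/
noncomputable def homogComp (d : Fin k → ℕ) (f : Fin k → A K n) (a : ℕ) : Fin k → A K n :=
  fun j => ∑ u ∈ (f j).support.filter fun u => tdeg u + d j = a,
    MvPolynomial.monomial u ((f j).coeff u)

/-- `M ⊆ F` is a graded submodule. -/
def IsGradedSub (d : Fin k → ℕ) (M : Submodule (A K n) (Fin k → A K n)) : Prop :=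
  ∀ f ∈ M, ∀ a, homogComp d f a ∈ M

/-- Hilbert function of `M ⊆ F` in degree `a`. -/
noncomputable def hilb (d : Fin k → ℕ) (M : Submodule (A K n) (Fin k → A K n)) (a : ℕ) : ℕ :=
  Module.finrank K ↥(Submodule.restrictScalars K M ⊓ homogSub d a)

/-- the homogeneous maximal ideal `m = (X_1,…,X_n)` of `A`. -/
noncomputable def mIdeal (K : Type*) [Field K] (n : ℕ) : Ideal (A K n) :=
  RingHom.ker (MvPolynomial.constantCoeff : A K n →+* K)

/-- graded Betti number `β_{0,a}(M) = dim_K (M/mM)_a`, the number of minimal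
generators of the graded module `M` in degree `a`. -/
noncomputable def beta0 (d : Fin k → ℕ) (M : Submodule (A K n) (Fin k → A K n)) (a : ℕ) : ℕ :=
  hilb d M a - hilb d (mIdeal K n • M) a

/-- A graded free resolution of a graded submodule `M` of `F = ⊕_j A(-d_j)`:
`⋯ → A^{rk 1} → A^{rk 0} → M → 0`, each free module coming with degree shifts
`sh i`, all maps graded of degree `0`. -/
structure GFRes (d : Fin k → ℕ) (M : Submodule (A K n) (Fin k → A K n)) where
  rk : ℕ → ℕ
  sh : (i : ℕ) → Fin (rk i) → ℕ
  aug : (Fin (rk 0) → A K n) →ₗ[A K n] (Fin k → A K n)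
  diff : (i : ℕ) → ((Fin (rk (i+1)) → A K n) →ₗ[A K n] (Fin (rk i) → A K n))
  aug_range : LinearMap.range aug = M
  aug_hom : ∀ l, IsHomog d (sh 0 l) (aug (Pi.single l 1))
  diff_hom : ∀ i l, IsHomog (sh i) (sh (i+1) l) (diff i (Pi.single l 1))
  ex0 : LinearMap.range (diff 0) = LinearMap.ker aug
  exs : ∀ i, LinearMap.range (diff (i+1)) = LinearMap.ker (diff i)

/-- minimality of a graded free resolution: all entries of the differential
matrices lie in the maximal ideal. -/
def GFRes.Minimal {d : Fin k → ℕ} {M : Submodule (A K n) (Fin k → A K n)}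
    (res : GFRes d M) : Prop :=
  ∀ i x l, res.diff i x l ∈ mIdeal K n

/-- the graded Betti number `β_{i,j}(M)` read off from a (minimal) resolution. -/
noncomputable def GFRes.betti {d : Fin k → ℕ} {M : Submodule (A K n) (Fin k → A K n)}
    (res : GFRes d M) (i j : ℕ) : ℕ :=
  (Finset.univ.filter fun l => res.sh i l = j).card

/-- `reg_A(M) ≤ r`: there is a minimal graded free resolution of `M` with
all shifts in homological degree `i` bounded by `i + r`. -/
def RegLE (d : Fin k → ℕ) (M : Submodule (A K n) (Fin k → A K n)) (r : ℕ) : Prop :=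
  ∃ res : GFRes d M, res.Minimal ∧ ∀ i l, res.sh i l ≤ i + r

/-- `M_{⟨a⟩}`: the submodule generated by the homogeneous elements of degree `a` of `M`. -/
noncomputable def compSub (d : Fin k → ℕ) (M : Submodule (A K n) (Fin k → A K n)) (a : ℕ) :
    Submodule (A K n) (Fin k → A K n) :=
  Submodule.span (A K n) {f | f ∈ M ∧ IsHomog d a f}

/-- `M` is `r`-componentwise regular: `reg (M_{⟨a⟩}) ≤ a + r` for all `a`. -/
def CWRegLE (d : Fin k → ℕ) (M : Submodule (A K n) (Fin k → A K n)) (r : ℕ) : Prop :=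
  ∀ a, RegLE d (compSub d M a) (a + r)

/-- `M` is componentwise linear: each `M_{⟨a⟩}` is zero or has regularity `a`. -/
def CompLinear (d : Fin k → ℕ) (M : Submodule (A K n) (Fin k → A K n)) : Prop :=
  ∀ a, compSub d M a = ⊥ ∨ RegLE d (compSub d M a) a

/-- `M` is generated in degrees `≤ a`. -/
def GenInDegLE (d : Fin k → ℕ) (M : Submodule (A K n) (Fin k → A K n)) (a : ℕ) : Prop :=
  M ≤ Submodule.span (A K n) {f | f ∈ M ∧ ∃ b ≤ a, IsHomog d b f}

end CregPaper

namespace CregPaper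

open MvPolynomial

variable {K : Type*} [Field K] {n k : ℕ}

theorem tdeg_add (u v : Fin n →₀ ℕ) : tdeg (u + v) = tdeg u + tdeg v := by
  classical
  simpa [tdeg] using Finsupp.sum_add_index' (f := u) (g := v) (h := fun _ e => e)
    (fun _ => rfl) (fun _ _ _ => rfl)

theorem wdeg_add (ω : Fin n → ℕ) (u v : Fin n →₀ ℕ) :
    wdeg ω (u + v) = wdeg ω u + wdeg ω v := by
  classical
  simpa [wdeg] using Finsupp.sum_add_index' (f := u) (g := v) (h := fun i e => ω i * e)
    (fun _ => rfl) (fun i a b => mul_add (ω i) a b)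

theorem coeff_homogComp (d : Fin k → ℕ) (f : Fin k → A K n) (e : ℕ) (j : Fin k)
    (u : Fin n →₀ ℕ) :
    (homogComp d f e j).coeff u = if tdeg u + d j = e then (f j).coeff u else 0 := by
  classical
  unfold homogComp
  rw [MvPolynomial.coeff_sum]
  simp only [MvPolynomial.coeff_monomial]
  rw [Finset.sum_ite_eq' _ u (fun v => (f j).coeff v)]
  simp only [Finset.mem_filter, MvPolynomial.mem_support_iff]
  by_cases h : tdeg u + d j = e
  · by_cases h0 : (f j).coeff u = 0 <;> simp [h, h0]
  · simp [h]

theorem coeff_inForm (ω : Fin n → ℕ) (ε : Fin k → ℕ) (f : Fin k → A K n) (j : Fin k)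
    (u : Fin n →₀ ℕ) :
    (inForm ω ε f j).coeff u =
      if wdeg ω u + ε j = maxWt ω ε f then (f j).coeff u else 0 := by
  classical
  unfold inForm
  rw [MvPolynomial.coeff_sum]
  simp only [MvPolynomial.coeff_monomial]
  rw [Finset.sum_ite_eq' _ u (fun v => (f j).coeff v)]
  simp only [Finset.mem_filter, MvPolynomial.mem_support_iff]
  by_cases h : wdeg ω u + ε j = maxWt ω ε f
  · by_cases h0 : (f j).coeff u = 0 <;> simp [h, h0]
  · simp [h]

theorem homogComp_add (d : Fin k → ℕ) (f g : Fin k → A K n) (e : ℕ) :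
    homogComp d (f + g) e = homogComp d f e + homogComp d g e := by
  funext j; apply MvPolynomial.ext; intro u
  simp only [Pi.add_apply, MvPolynomial.coeff_add, coeff_homogComp]
  split_ifs <;> simp

theorem homogComp_smulK (d : Fin k → ℕ) (c : K) (f : Fin k → A K n) (e : ℕ) :
    homogComp d (c • f) e = c • homogComp d f e := by
  funext j; apply MvPolynomial.ext; intro u
  simp only [Pi.smul_apply, MvPolynomial.coeff_smul, coeff_homogComp]
  split_ifs <;> simp

theorem homogComp_zero (d : Fin k → ℕ) (e : ℕ) : homogComp d (0 : Fin k → A K n) e = 0 := by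
  funext j; apply MvPolynomial.ext; intro u
  simp [coeff_homogComp]

theorem isHomog_homogComp (d : Fin k → ℕ) (f : Fin k → A K n) (e : ℕ) :
    IsHomog d e (homogComp d f e) := by
  intro j u hu
  rw [MvPolynomial.mem_support_iff, coeff_homogComp] at hu
  by_contra h
  simp [h] at hu

theorem homogComp_of_isHomog {d : Fin k → ℕ} {f : Fin k → A K n} {e : ℕ}
    (hf : IsHomog d e f) : homogComp d f e = f := by
  funext j; apply MvPolynomial.ext; intro u
  rw [coeff_homogComp]
  by_cases h : tdeg u + d j = e
  · simp [h]
  · simp only [h, if_false]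
    by_contra h0
    exact h (hf j u (MvPolynomial.mem_support_iff.mpr fun hc => h0 hc.symm))

theorem homogComp_of_isHomog_ne {d : Fin k → ℕ} {f : Fin k → A K n} {b e : ℕ}
    (hf : IsHomog d b f) (hne : e ≠ b) : homogComp d f e = 0 := by
  funext j; apply MvPolynomial.ext; intro u
  rw [coeff_homogComp]
  by_cases h : tdeg u + d j = e
  · simp only [h, if_true]
    by_contra h0
    exact hne (h ▸ (hf j u (MvPolynomial.mem_support_iff.mpr h0)) ▸ rfl)
  · simp [h]

theorem exists_degBound (d : Fin k → ℕ) (f : Fin k → A K n) :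
    ∃ B, ∀ j, ∀ u ∈ (f j).support, tdeg u + d j ≤ B := by
  classical
  refine ⟨Finset.univ.sup fun j => ((f j).support.sup tdeg) + d j, fun j u hu => ?_⟩
  exact le_trans (add_le_add_left (Finset.le_sup hu) (d j))
    (Finset.le_sup (f := fun j => ((f j).support.sup tdeg) + d j) (Finset.mem_univ j))

theorem sum_homogComp {d : Fin k → ℕ} {f : Fin k → A K n} {B : ℕ}
    (hB : ∀ j, ∀ u ∈ (f j).support, tdeg u + d j ≤ B) :
    (∑ e ∈ Finset.range (B + 1), homogComp d f e) = f := by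
  classical
  funext j; apply MvPolynomial.ext; intro u
  rw [Finset.sum_apply, MvPolynomial.coeff_sum]
  simp only [coeff_homogComp]
  rw [Finset.sum_ite_eq (Finset.range (B+1)) (tdeg u + d j) (fun _ => (f j).coeff u)]
  by_cases hu : (f j).coeff u = 0
  · simp [hu]
  · have : tdeg u + d j ∈ Finset.range (B + 1) :=
      Finset.mem_range.mpr (Nat.lt_succ_of_le (hB j u (MvPolynomial.mem_support_iff.mpr hu)))
    simp [this]

end CregPaper

namespace CregPaper

open MvPolynomial Pointwise

variable {K : Type*} [Field K] {n k : ℕ}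

theorem mem_homogSub {d : Fin k → ℕ} {e : ℕ} {f : Fin k → A K n} :
    f ∈ homogSub d e ↔ IsHomog d e f := Iff.rfl

instance homogSub_fd (d : Fin k → ℕ) (e : ℕ) :
    FiniteDimensional K ↥(homogSub (K := K) (n := n) d e) := by
  classical
  let φ : ↥(homogSub (K := K) (n := n) d e) →ₗ[K]
      (Fin k → ↥(restrictTotalDegree (Fin n) K e)) :=
    { toFun := fun x => fun j => ⟨x.1 j, by
        rw [mem_restrictTotalDegree, MvPolynomial.totalDegree]
        exact Finset.sup_le fun u hu => (x.2 j u hu) ▸ Nat.le_add_right _ _⟩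
      map_add' := fun x y => by funext j; exact Subtype.ext rfl
      map_smul' := fun c x => by funext j; exact Subtype.ext rfl }
  have hφ : Function.Injective φ := by
    intro x y hxy
    apply Subtype.ext; funext j
    exact congrArg Subtype.val (congrFun hxy j)
  exact FiniteDimensional.of_injective φ hφ

/-- the degree-`e` graded piece of a submodule, as a `K`-subspace. -/
noncomputable def deg (d : Fin k → ℕ) (T : Submodule (A K n) (Fin k → A K n)) (e : ℕ) :
    Submodule K (Fin k → A K n) := Submodule.restrictScalars K T ⊓ homogSub d e

theorem hilb_eq_finrank_deg (d : Fin k → ℕ) (T : Submodule (A K n) (Fin k → A K n)) (e : ℕ) :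
    hilb d T e = Module.finrank K ↥(deg d T e) := rfl

instance deg_fd (d : Fin k → ℕ) (T : Submodule (A K n) (Fin k → A K n)) (e : ℕ) :
    FiniteDimensional K ↥(deg d T e) :=
  Submodule.finiteDimensional_of_le (inf_le_right (a := Submodule.restrictScalars K T))

theorem mem_deg {d : Fin k → ℕ} {T : Submodule (A K n) (Fin k → A K n)} {e : ℕ}
    {f : Fin k → A K n} : f ∈ deg d T e ↔ f ∈ T ∧ IsHomog d e f := Iff.rfl

/-- polynomial homogeneity of degree `q`. -/
def PHomog (p : A K n) (q : ℕ) : Prop := ∀ u ∈ p.support, tdeg u = q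

theorem isHomog_smul {p : A K n} {q : ℕ} {d : Fin k → ℕ} {b : ℕ} {t : Fin k → A K n}
    (hp : PHomog p q) (ht : IsHomog d b t) : IsHomog d (q + b) (p • t) := by
  classical
  intro j u hu
  have : u ∈ p.support + (t j).support := MvPolynomial.support_mul p (t j) hu
  rcases Finset.mem_add.mp this with ⟨v, hv, w, hw, rfl⟩
  rw [tdeg_add, hp v hv, add_assoc, ht j w hw]

/-- the part of `p` of polynomial degree `e - b`, as needed for degree-`e`
components of `p • t` with `t` homogeneous of degree `b`. -/
noncomputable def pPart (p : A K n) (b e : ℕ) : A K n :=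
  ∑ u ∈ p.support.filter fun u => tdeg u + b = e, MvPolynomial.monomial u (p.coeff u)

theorem coeff_pPart (p : A K n) (b e : ℕ) (u : Fin n →₀ ℕ) :
    (pPart p b e).coeff u = if tdeg u + b = e then p.coeff u else 0 := by
  classical
  unfold pPart
  rw [MvPolynomial.coeff_sum]
  simp only [MvPolynomial.coeff_monomial]
  rw [Finset.sum_ite_eq' _ u (fun v => p.coeff v)]
  simp only [Finset.mem_filter, MvPolynomial.mem_support_iff]
  by_cases h : tdeg u + b = e
  · by_cases h0 : p.coeff u = 0 <;> simp [h, h0]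
  · simp [h]

theorem homogComp_smul_of_isHomog {d : Fin k → ℕ} {b : ℕ} {t : Fin k → A K n}
    (ht : IsHomog d b t) (p : A K n) (e : ℕ) :
    homogComp d (p • t) e = pPart p b e • t := by
  classical
  funext j; apply MvPolynomial.ext; intro u
  rw [coeff_homogComp]
  have hL : ((p • t) j).coeff u = ∑ x ∈ Finset.HasAntidiagonal.antidiagonal u, p.coeff x.1 * (t j).coeff x.2 :=
    MvPolynomial.coeff_mul p (t j) u
  have hR : ((pPart p b e • t) j).coeff u =
      ∑ x ∈ Finset.HasAntidiagonal.antidiagonal u,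
        (if tdeg x.1 + b = e then p.coeff x.1 else 0) * (t j).coeff x.2 := by
    rw [show ((pPart p b e • t) j) = pPart p b e * t j from rfl, MvPolynomial.coeff_mul]
    exact Finset.sum_congr rfl fun x _ => by rw [coeff_pPart]
  rw [hR]
  by_cases h : tdeg u + d j = e
  · rw [if_pos h, hL]
    refine Finset.sum_congr rfl fun x hx => ?_
    by_cases h0 : (t j).coeff x.2 = 0
    · simp [h0]
    · have hb := ht j x.2 (MvPolynomial.mem_support_iff.mpr h0)
      have hu : x.1 + x.2 = u := Finset.HasAntidiagonal.mem_antidiagonal.mp hx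
      have h1 : tdeg u = tdeg x.1 + tdeg x.2 := by rw [← hu, tdeg_add]
      have : tdeg x.1 + b = e := by omega
      rw [if_pos this]
  · rw [if_neg h]
    refine (Finset.sum_eq_zero fun x hx => ?_).symm
    by_cases h0 : (t j).coeff x.2 = 0
    · simp [h0]
    · have hb := ht j x.2 (MvPolynomial.mem_support_iff.mpr h0)
      have hu : x.1 + x.2 = u := Finset.HasAntidiagonal.mem_antidiagonal.mp hx
      have h1 : tdeg u = tdeg x.1 + tdeg x.2 := by rw [← hu, tdeg_add]
      have : ¬ (tdeg x.1 + b = e) := by omega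
      rw [if_neg this, zero_mul]

theorem pPart_support (p : A K n) (b e : ℕ) :
    ∀ u ∈ (pPart p b e).support, tdeg u + b = e := by
  intro u hu
  rw [MvPolynomial.mem_support_iff, coeff_pPart] at hu
  by_contra h; simp [h] at hu

theorem mem_mIdeal_iff {p : A K n} : p ∈ mIdeal K n ↔ MvPolynomial.coeff 0 p = 0 := by
  rw [mIdeal, RingHom.mem_ker, MvPolynomial.constantCoeff_eq]

theorem tdeg_zero : tdeg (0 : Fin n →₀ ℕ) = 0 := by simp [tdeg]

theorem pPart_mem_mIdeal {p : A K n} {b e : ℕ} (h : b ≠ e) : pPart p b e ∈ mIdeal K n := by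
  rw [mem_mIdeal_iff, coeff_pPart, tdeg_zero, zero_add, if_neg h]

theorem phomog_mem_mIdeal {p : A K n} {q : ℕ} (hp : PHomog p q) (hq : q ≠ 0) :
    p ∈ mIdeal K n := by
  rw [mem_mIdeal_iff]
  by_contra h0
  exact hq ((tdeg_zero ▸ hp 0 (MvPolynomial.mem_support_iff.mpr h0)).symm ▸ rfl)

theorem tdeg_eq_sum_univ (u : Fin n →₀ ℕ) : tdeg u = ∑ i, u i := by
  rw [tdeg]; exact Finsupp.sum_fintype u (fun _ e => e) (fun _ => rfl)

theorem exists_le_tdeg {u : Fin n →₀ ℕ} {m : ℕ} (hm : m ≤ tdeg u) :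
    ∃ v ≤ u, tdeg v = m := by
  classical
  induction m with
  | zero => exact ⟨0, zero_le, tdeg_zero⟩
  | succ m ih =>
    obtain ⟨v, hvu, hv⟩ := ih (Nat.le_of_succ_le hm)
    have hlt : tdeg v < tdeg u := by omega
    have : ∃ i, v i < u i := by
      by_contra hc
      push_neg at hc
      rw [tdeg_eq_sum_univ, tdeg_eq_sum_univ] at hlt
      exact absurd (Finset.sum_le_sum fun i _ => hc i) (not_le.mpr hlt)
    obtain ⟨i, hi⟩ := this
    refine ⟨v + Finsupp.single i 1, ?_, ?_⟩
    · rw [Finsupp.le_def]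
      intro j
      rcases eq_or_ne j i with rfl | hji
      · simpa [Finsupp.single_apply] using hi
      · simpa [Finsupp.single_apply, hji.symm] using Finsupp.le_def.mp hvu j
    · rw [tdeg_add, hv, tdeg, Finsupp.sum_single_index] ; rfl

end CregPaper

namespace CregPaper

open MvPolynomial Pointwise

variable {K : Type*} [Field K] {n k : ℕ}

theorem le_maxWt {ω : Fin n → ℕ} {ε : Fin k → ℕ} {f : Fin k → A K n} {j : Fin k}
    {u : Fin n →₀ ℕ} (hu : u ∈ (f j).support) : wdeg ω u + ε j ≤ maxWt ω ε f :=
  le_trans (Finset.le_sup (f := fun u => wdeg ω u + ε j) hu)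
    (Finset.le_sup (f := fun j => (f j).support.sup fun u => wdeg ω u + ε j)
      (Finset.mem_univ j))

theorem maxWt_le {ω : Fin n → ℕ} {ε : Fin k → ℕ} {f : Fin k → A K n} {W : ℕ}
    (h : ∀ j, ∀ u ∈ (f j).support, wdeg ω u + ε j ≤ W) : maxWt ω ε f ≤ W :=
  Finset.sup_le fun j _ => Finset.sup_le fun u hu => h j u hu

theorem exists_max_term {ω : Fin n → ℕ} {ε : Fin k → ℕ} {f : Fin k → A K n} (hf : f ≠ 0) :
    ∃ j, ∃ u ∈ (f j).support, wdeg ω u + ε j = maxWt ω ε f := by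
  classical
  have hk : ∃ j0, f j0 ≠ 0 := by
    by_contra hc; push_neg at hc; exact hf (funext hc)
  obtain ⟨j0, hj0⟩ := hk
  obtain ⟨j1, -, hj1⟩ := Finset.exists_mem_eq_sup (Finset.univ (α := Fin k))
    ⟨j0, Finset.mem_univ j0⟩ (fun j => (f j).support.sup fun u => wdeg ω u + ε j)
  by_cases h1 : f j1 = 0
  · have hW : maxWt ω ε f = 0 := by unfold maxWt; rw [hj1, h1]; simp
    have hne : (f j0).support.Nonempty :=
      Finset.nonempty_iff_ne_empty.mpr (fun hc => hj0 (MvPolynomial.support_eq_empty.mp hc))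
    obtain ⟨u, hu⟩ := hne
    refine ⟨j0, u, hu, ?_⟩
    have h2 := le_maxWt (ω := ω) (ε := ε) hu
    omega
  · have hne : (f j1).support.Nonempty :=
      Finset.nonempty_iff_ne_empty.mpr (fun hc => h1 (MvPolynomial.support_eq_empty.mp hc))
    obtain ⟨u, hu, hueq⟩ := Finset.exists_mem_eq_sup ((f j1).support) hne
      (fun u => wdeg ω u + ε j1)
    refine ⟨j1, u, hu, ?_⟩
    unfold maxWt
    rw [hj1]
    exact hueq.symm

theorem support_inForm {ω : Fin n → ℕ} {ε : Fin k → ℕ} {f : Fin k → A K n} {j : Fin k}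
    {u : Fin n →₀ ℕ} (hu : u ∈ (inForm ω ε f j).support) :
    u ∈ (f j).support ∧ wdeg ω u + ε j = maxWt ω ε f := by
  rw [MvPolynomial.mem_support_iff, coeff_inForm] at hu
  by_cases h : wdeg ω u + ε j = maxWt ω ε f
  · rw [if_pos h] at hu; exact ⟨MvPolynomial.mem_support_iff.mpr hu, h⟩
  · rw [if_neg h] at hu; exact absurd rfl hu

theorem inForm_ne_zero {ω : Fin n → ℕ} {ε : Fin k → ℕ} {f : Fin k → A K n} (hf : f ≠ 0) :
    inForm ω ε f ≠ 0 := by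
  obtain ⟨j, u, hu, hw⟩ := exists_max_term (ω := ω) (ε := ε) hf
  intro hc
  have : (inForm ω ε f j).coeff u = 0 := by rw [hc]; rfl
  rw [coeff_inForm, if_pos hw] at this
  exact MvPolynomial.mem_support_iff.mp hu this

theorem isHomog_inForm {ω : Fin n → ℕ} {ε : Fin k → ℕ} {d : Fin k → ℕ} {e : ℕ}
    {f : Fin k → A K n} (hf : IsHomog d e f) : IsHomog d e (inForm ω ε f) :=
  fun j u hu => hf j u (support_inForm hu).1

theorem support_smulK {c : K} (hc : c ≠ 0) (p : A K n) : (c • p).support = p.support :=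
  MvPolynomial.support_smul_eq hc p

theorem maxWt_smulK {ω : Fin n → ℕ} {ε : Fin k → ℕ} {c : K} (hc : c ≠ 0) (f : Fin k → A K n) :
    maxWt ω ε (c • f) = maxWt ω ε f := by
  unfold maxWt
  congr 1; funext j
  rw [show (c • f) j = c • f j from rfl, support_smulK hc]

theorem inForm_smulK {ω : Fin n → ℕ} {ε : Fin k → ℕ} {c : K} (hc : c ≠ 0) (f : Fin k → A K n) :
    inForm ω ε (c • f) = c • inForm ω ε f := by
  funext j; apply MvPolynomial.ext; intro u
  rw [coeff_inForm, show (c • inForm ω ε f) j = c • inForm ω ε f j from rfl,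
    MvPolynomial.coeff_smul, coeff_inForm, maxWt_smulK hc,
    show ((c • f) j).coeff u = c * (f j).coeff u from MvPolynomial.coeff_smul u c (f j)]
  split_ifs <;> simp

theorem support_monomial_mul (v : Fin n →₀ ℕ) {c : K} (hc : c ≠ 0) (p : A K n) :
    ((MvPolynomial.monomial v c) * p).support = p.support.map (addLeftEmbedding v) :=
  AddMonoidAlgebra.support_coeff_single_mul p c (fun y => by simp [hc]) v

theorem monomial_smul_apply (v : Fin n →₀ ℕ) (c : K) (f : Fin k → A K n) (j : Fin k) :
    ((MvPolynomial.monomial v c) • f) j = (MvPolynomial.monomial v c) * f j := rfl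

theorem maxWt_monomial_smul {ω : Fin n → ℕ} {ε : Fin k → ℕ} {c : K} (hc : c ≠ 0)
    {f : Fin k → A K n} (hf : f ≠ 0) (v : Fin n →₀ ℕ) :
    maxWt ω ε ((MvPolynomial.monomial v c) • f) = wdeg ω v + maxWt ω ε f := by
  apply le_antisymm
  · apply maxWt_le
    intro j u hu
    rw [monomial_smul_apply, support_monomial_mul v hc] at hu
    obtain ⟨w, hw, rfl⟩ := Finset.mem_map.mp hu
    rw [addLeftEmbedding_apply, wdeg_add, add_assoc]
    exact add_le_add_right (le_maxWt hw) _
  · obtain ⟨j, u, hu, hwt⟩ := exists_max_term (ω := ω) (ε := ε) hf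
    have : v + u ∈ (((MvPolynomial.monomial v c) • f) j).support := by
      rw [monomial_smul_apply, support_monomial_mul v hc, Finset.mem_map]
      exact ⟨u, hu, rfl⟩
    calc wdeg ω v + maxWt ω ε f = wdeg ω (v + u) + ε j := by rw [wdeg_add, add_assoc, hwt]
    _ ≤ _ := le_maxWt this

theorem monomial_smul_ne_zero {c : K} (hc : c ≠ 0) {f : Fin k → A K n} (hf : f ≠ 0)
    (v : Fin n →₀ ℕ) : (MvPolynomial.monomial v c) • f ≠ 0 := by
  obtain ⟨j, u, hu, -⟩ := exists_max_term (ω := fun _ => 0) (ε := fun _ => 0) hf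
  intro hcon
  have h0 : (((MvPolynomial.monomial v c) • f) j).coeff (v + u) = 0 := by rw [hcon]; rfl
  rw [monomial_smul_apply, MvPolynomial.coeff_monomial_mul] at h0
  rcases mul_eq_zero.mp h0 with h | h
  · exact hc h
  · exact MvPolynomial.mem_support_iff.mp hu h

theorem inForm_monomial_smul {ω : Fin n → ℕ} {ε : Fin k → ℕ} {c : K} (hc : c ≠ 0)
    {f : Fin k → A K n} (hf : f ≠ 0) (v : Fin n →₀ ℕ) :
    inForm ω ε ((MvPolynomial.monomial v c) • f) =
      (MvPolynomial.monomial v c) • inForm ω ε f := by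
  classical
  funext j; apply MvPolynomial.ext; intro u
  rw [coeff_inForm, monomial_smul_apply, monomial_smul_apply,
    MvPolynomial.coeff_monomial_mul' u v c (f j),
    MvPolynomial.coeff_monomial_mul' u v c (inForm ω ε f j),
    maxWt_monomial_smul hc hf v, coeff_inForm]
  by_cases hvu : v ≤ u
  · have hsplit : v + (u - v) = u := add_tsub_cancel_of_le hvu
    have hw : wdeg ω u = wdeg ω v + wdeg ω (u - v) := by rw [← wdeg_add, hsplit]
    by_cases hcond : wdeg ω (u - v) + ε j = maxWt ω ε f
    · rw [if_pos hvu, if_pos hvu, if_pos hcond, if_pos (by omega)]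
    · rw [if_pos hvu, if_pos hvu, if_neg hcond, if_neg (by omega), mul_zero]
  · rw [if_neg hvu, if_neg hvu, ite_self]

end CregPaper

namespace CregPaper

open MvPolynomial Pointwise

variable {K : Type*} [Field K] {n k : ℕ}

/-! ### weight components -/

/-- the (K-linear) weight-`w` component. -/
noncomputable def wtComp (ω : Fin n → ℕ) (ε : Fin k → ℕ) (w : ℕ) (f : Fin k → A K n) :
    Fin k → A K n :=
  fun j => ∑ u ∈ (f j).support.filter fun u => wdeg ω u + ε j = w,
    MvPolynomial.monomial u ((f j).coeff u)

theorem coeff_wtComp (ω : Fin n → ℕ) (ε : Fin k → ℕ) (w : ℕ) (f : Fin k → A K n)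
    (j : Fin k) (u : Fin n →₀ ℕ) :
    (wtComp ω ε w f j).coeff u = if wdeg ω u + ε j = w then (f j).coeff u else 0 := by
  classical
  unfold wtComp
  rw [MvPolynomial.coeff_sum]
  simp only [MvPolynomial.coeff_monomial]
  rw [Finset.sum_ite_eq' _ u (fun v => (f j).coeff v)]
  simp only [Finset.mem_filter, MvPolynomial.mem_support_iff]
  by_cases h : wdeg ω u + ε j = w
  · by_cases h0 : (f j).coeff u = 0 <;> simp [h, h0]
  · simp [h]

theorem inForm_eq_wtComp (ω : Fin n → ℕ) (ε : Fin k → ℕ) (f : Fin k → A K n) :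
    inForm ω ε f = wtComp ω ε (maxWt ω ε f) f := by
  funext j; apply MvPolynomial.ext; intro u
  rw [coeff_inForm, coeff_wtComp]

/-- `wtComp` as a `K`-linear endomorphism. -/
noncomputable def wtCompₗ (ω : Fin n → ℕ) (ε : Fin k → ℕ) (w : ℕ) :
    (Fin k → A K n) →ₗ[K] (Fin k → A K n) where
  toFun := wtComp ω ε w
  map_add' f g := by
    funext j; apply MvPolynomial.ext; intro u
    simp only [coeff_wtComp, Pi.add_apply, MvPolynomial.coeff_add]
    split_ifs <;> simp
  map_smul' c f := by
    funext j; apply MvPolynomial.ext; intro u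
    simp only [coeff_wtComp, Pi.smul_apply, MvPolynomial.coeff_smul, RingHom.id_apply]
    split_ifs <;> simp

/-- elements all of whose terms have weight `< w`. -/
noncomputable def wtBelow (ω : Fin n → ℕ) (ε : Fin k → ℕ) (w : ℕ) :
    Submodule K (Fin k → A K n) where
  carrier := {f | ∀ j, ∀ u ∈ (f j).support, wdeg ω u + ε j < w}
  add_mem' := by
    intro f g hf hg j u hu
    rcases Finset.mem_union.mp (MvPolynomial.support_add hu) with h | h
    · exact hf j u h
    · exact hg j u h
  zero_mem' := by intro j u hu; simp at hu
  smul_mem' := by intro c f hf j u hu; exact hf j u (MvPolynomial.support_smul hu)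

/-- elements all of whose terms have weight exactly `w`. -/
noncomputable def wtExact (ω : Fin n → ℕ) (ε : Fin k → ℕ) (w : ℕ) :
    Submodule K (Fin k → A K n) where
  carrier := {f | ∀ j, ∀ u ∈ (f j).support, wdeg ω u + ε j = w}
  add_mem' := by
    intro f g hf hg j u hu
    rcases Finset.mem_union.mp (MvPolynomial.support_add hu) with h | h
    · exact hf j u h
    · exact hg j u h
  zero_mem' := by intro j u hu; simp at hu
  smul_mem' := by intro c f hf j u hu; exact hf j u (MvPolynomial.support_smul hu)

theorem wtBelow_inf_wtExact (ω : Fin n → ℕ) (ε : Fin k → ℕ) (w : ℕ) :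
    wtBelow (K := K) ω ε w ⊓ wtExact ω ε w = ⊥ := by
  rw [eq_bot_iff]
  rintro f ⟨hb, he⟩
  have : f = 0 := by
    funext j; apply MvPolynomial.ext; intro u
    by_contra h0
    have hu : u ∈ (f j).support := MvPolynomial.mem_support_iff.mpr
      (fun hc => h0 (by rw [hc]; rfl))
    exact absurd (he j u hu) (Nat.ne_of_lt (hb j u hu))
  simp [this]

theorem support_wtComp (ω : Fin n → ℕ) (ε : Fin k → ℕ) (w : ℕ) (f : Fin k → A K n)
    (j : Fin k) {u : Fin n →₀ ℕ} (hu : u ∈ (wtComp ω ε w f j).support) :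
    u ∈ (f j).support ∧ wdeg ω u + ε j = w := by
  rw [MvPolynomial.mem_support_iff, coeff_wtComp] at hu
  by_cases h : wdeg ω u + ε j = w
  · rw [if_pos h] at hu; exact ⟨MvPolynomial.mem_support_iff.mpr hu, h⟩
  · rw [if_neg h] at hu; exact absurd rfl hu

theorem wtComp_eq_zero_of_lt {ω : Fin n → ℕ} {ε : Fin k → ℕ} {w : ℕ} {f : Fin k → A K n}
    (h : maxWt ω ε f < w) : wtComp ω ε w f = 0 := by
  funext j; apply MvPolynomial.ext; intro u
  rw [coeff_wtComp]
  by_cases hc : wdeg ω u + ε j = w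
  · rw [if_pos hc]
    by_contra h0
    have := le_maxWt (ω := ω) (ε := ε) (MvPolynomial.mem_support_iff.mpr fun hz => h0 (by rw [hz]; rfl))
    omega
  · simp [hc]

theorem wtComp_eq_self {ω : Fin n → ℕ} {ε : Fin k → ℕ} {w : ℕ} {f : Fin k → A K n}
    (h : ∀ j, ∀ u ∈ (f j).support, wdeg ω u + ε j = w) : wtComp ω ε w f = f := by
  funext j; apply MvPolynomial.ext; intro u
  rw [coeff_wtComp]
  by_cases hc : wdeg ω u + ε j = w
  · simp [hc]
  · rw [if_neg hc]
    by_contra h0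
    exact hc (h j u (MvPolynomial.mem_support_iff.mpr fun hz => h0 (by rw [hz])))

theorem wtComp_ker_mem {ω : Fin n → ℕ} {ε : Fin k → ℕ} {w : ℕ} {f : Fin k → A K n}
    (hb : ∀ j, ∀ u ∈ (f j).support, wdeg ω u + ε j ≤ w) (hz : wtComp ω ε w f = 0) :
    ∀ j, ∀ u ∈ (f j).support, wdeg ω u + ε j < w := by
  intro j u hu
  rcases Nat.lt_or_ge (wdeg ω u + ε j) w with h | h
  · exact h
  · have heq : wdeg ω u + ε j = w := le_antisymm (hb j u hu) h
    have : (wtComp ω ε w f j).coeff u = 0 := by rw [hz]; rfl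
    rw [coeff_wtComp, if_pos heq] at this
    exact absurd this (MvPolynomial.mem_support_iff.mp hu)

/-- the span of initial forms of nonzero elements of a `K`-subspace. -/
noncomputable def inSpanV (ω : Fin n → ℕ) (ε : Fin k → ℕ) (V : Submodule K (Fin k → A K n)) :
    Submodule K (Fin k → A K n) :=
  Submodule.span K {g | ∃ f, f ∈ V ∧ f ≠ 0 ∧ g = inForm ω ε f}

theorem maxWt_le_of_mem_wtBelow {ω : Fin n → ℕ} {ε : Fin k → ℕ} {w : ℕ}
    {f : Fin k → A K n} (hf : f ∈ wtBelow (K := K) ω ε (w + 1)) : maxWt ω ε f ≤ w :=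
  maxWt_le fun j u hu => Nat.lt_succ_iff.mp (hf j u hu)

end CregPaper

namespace CregPaper

open MvPolynomial Pointwise

variable {K : Type*} [Field K] {n k : ℕ}

theorem inSpanV_mono (ω : Fin n → ℕ) (ε : Fin k → ℕ) {V W : Submodule K (Fin k → A K n)}
    (h : V ≤ W) : inSpanV ω ε V ≤ inSpanV ω ε W :=
  Submodule.span_mono fun _ ⟨f, hf, hf0, hg⟩ => ⟨f, h hf, hf0, hg⟩

theorem core_finrank (ω : Fin n → ℕ) (ε : Fin k → ℕ) (B : ℕ) :
    ∀ (V : Submodule K (Fin k → A K n)), FiniteDimensional K ↥V →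
      (∀ f ∈ V, ∀ j, ∀ u ∈ (f j).support, wdeg ω u + ε j ≤ B) →
      FiniteDimensional K ↥(inSpanV ω ε V) ∧
        Module.finrank K ↥(inSpanV ω ε V) = Module.finrank K ↥V := by
  induction B with
  | zero =>
    intro V hfd hb
    have hV : inSpanV ω ε V = V := by
      apply le_antisymm
      · rw [inSpanV, Submodule.span_le]
        rintro g ⟨f, hf, hf0, rfl⟩
        rw [inForm_eq_wtComp]
        have hmw : maxWt ω ε f = 0 := Nat.le_zero.mp (maxWt_le fun j u hu => hb f hf j u hu)
        rw [hmw, wtComp_eq_self fun j u hu => Nat.le_zero.mp (hb f hf j u hu)]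
        exact hf
      · intro f hf
        rcases eq_or_ne f 0 with rfl | hf0
        · exact Submodule.zero_mem _
        · apply Submodule.subset_span
          refine ⟨f, hf, hf0, ?_⟩
          rw [inForm_eq_wtComp, Nat.le_zero.mp (maxWt_le fun j u hu => hb f hf j u hu),
            wtComp_eq_self fun j u hu => Nat.le_zero.mp (hb f hf j u hu)]
    rw [hV]
    exact ⟨hfd, rfl⟩
  | succ B ih =>
    intro V hfd hb
    haveI := hfd
    set V' : Submodule K (Fin k → A K n) := V ⊓ wtBelow ω ε (B + 1) with hV'def
    haveI hfd' : FiniteDimensional K ↥V' :=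
      Submodule.finiteDimensional_of_le (inf_le_left (b := wtBelow ω ε (B + 1)))
    have hb' : ∀ f ∈ V', ∀ j, ∀ u ∈ (f j).support, wdeg ω u + ε j ≤ B :=
      fun f hf j u hu => Nat.lt_succ_iff.mp (hf.2 j u hu)
    obtain ⟨ihfd, ihrk⟩ := ih V' hfd' hb'
    set ρ : ↥V →ₗ[K] (Fin k → A K n) := (wtCompₗ ω ε (B + 1)).comp V.subtype with hρdef
    have hrange : LinearMap.range ρ = Submodule.map (wtCompₗ ω ε (B + 1)) V := by
      rw [hρdef, LinearMap.range_comp, Submodule.range_subtype]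
    have hker : Submodule.map V.subtype (LinearMap.ker ρ) = V' := by
      apply le_antisymm
      · rintro x ⟨⟨y, hy⟩, hk, rfl⟩
        have hk' : wtComp ω ε (B + 1) y = 0 := hk
        exact ⟨hy, wtComp_ker_mem (fun j u hu => hb y hy j u hu) hk'⟩
      · rintro x ⟨hxV, hxB⟩
        refine ⟨⟨x, hxV⟩, ?_, rfl⟩
        show wtComp ω ε (B + 1) x = 0
        exact wtComp_eq_zero_of_lt (Nat.lt_succ_of_le (maxWt_le_of_mem_wtBelow hxB))
    have hsup : inSpanV ω ε V = inSpanV ω ε V' ⊔ Submodule.map (wtCompₗ ω ε (B + 1)) V := by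
      apply le_antisymm
      · rw [inSpanV, Submodule.span_le]
        rintro g ⟨f, hf, hf0, rfl⟩
        by_cases hmw : maxWt ω ε f = B + 1
        · apply Submodule.mem_sup_right
          rw [inForm_eq_wtComp, hmw]
          exact ⟨f, hf, rfl⟩
        · apply Submodule.mem_sup_left
          have hfB : f ∈ V' := by
            refine ⟨hf, fun j u hu => ?_⟩
            have h1 := le_maxWt (ω := ω) (ε := ε) hu
            have h2 := maxWt_le fun j u hu => hb f hf j u hu
            omega
          exact Submodule.subset_span ⟨f, hfB, hf0, rfl⟩
      · apply sup_le
        · exact inSpanV_mono ω ε (inf_le_left (b := wtBelow ω ε (B + 1)))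
        · rintro x ⟨f, hf, rfl⟩
          rcases eq_or_ne f 0 with rfl | hf0
          · rw [map_zero]; exact Submodule.zero_mem _
          by_cases hmw : maxWt ω ε f = B + 1
          · apply Submodule.subset_span
            exact ⟨f, hf, hf0, by rw [inForm_eq_wtComp, hmw]; rfl⟩
          · have : maxWt ω ε f < B + 1 :=
              Nat.lt_of_le_of_ne (maxWt_le fun j u hu => hb f hf j u hu) hmw
            show wtComp ω ε (B + 1) f ∈ _
            rw [wtComp_eq_zero_of_lt this]
            exact Submodule.zero_mem _
    have hdisj : inSpanV ω ε V' ⊓ Submodule.map (wtCompₗ ω ε (B + 1)) V = ⊥ := by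
      rw [← le_bot_iff, ← wtBelow_inf_wtExact ω ε (B + 1)]
      apply inf_le_inf
      · rw [inSpanV, Submodule.span_le]
        rintro g ⟨f, hf, hf0, rfl⟩
        intro j u hu
        exact hf.2 j u (support_inForm hu).1
      · rintro x ⟨f, hf, rfl⟩
        intro j u hu
        exact (support_wtComp ω ε (B + 1) f j hu).2
    haveI hfd2 : FiniteDimensional K ↥(Submodule.map (wtCompₗ ω ε (B + 1)) V) :=
      Module.Finite.map _ _
    haveI hfdsup : FiniteDimensional K ↥(inSpanV ω ε V) := by
      rw [hsup]; infer_instance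
    refine ⟨hfdsup, ?_⟩
    have := Submodule.finrank_sup_add_finrank_inf_eq (inSpanV ω ε V')
      (Submodule.map (wtCompₗ ω ε (B + 1)) V)
    rw [hdisj] at this
    have hrn := LinearMap.finrank_range_add_finrank_ker ρ
    have h1 : Module.finrank K ↥(LinearMap.range ρ) =
        Module.finrank K ↥(Submodule.map (wtCompₗ ω ε (B + 1)) V) := by rw [hrange]
    have h2 : Module.finrank K ↥(LinearMap.ker ρ) = Module.finrank K ↥V' := by
      rw [← hker, Submodule.finrank_map_subtype_eq]
    rw [hsup]
    simp only [finrank_bot, add_zero] at this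
    omega
  
end CregPaper

namespace CregPaper

open MvPolynomial Pointwise

variable {K : Type*} [Field K] {n k : ℕ}

theorem inForm_mem_inMod {ω : Fin n → ℕ} {ε : Fin k → ℕ} {T : Submodule (A K n) (Fin k → A K n)}
    {f : Fin k → A K n} (hf : f ∈ T) (hf0 : f ≠ 0) : inForm ω ε f ∈ inMod ω ε T :=
  Submodule.subset_span ⟨f, hf, hf0, rfl⟩

theorem inMod_restrict (ω : Fin n → ℕ) (ε : Fin k → ℕ) (T : Submodule (A K n) (Fin k → A K n)) :
    Submodule.restrictScalars K (inMod ω ε T) =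
      Submodule.span K {g | ∃ f ∈ T, f ≠ 0 ∧ g = inForm ω ε f} := by
  classical
  apply le_antisymm
  · intro x hx
    change x ∈ inMod ω ε T at hx
    rw [inMod] at hx
    induction hx using Submodule.span_induction with
    | mem g hg => exact Submodule.subset_span hg
    | zero => exact Submodule.zero_mem _
    | add y z _ _ hy hz => exact Submodule.add_mem _ hy hz
    | smul a y hyspan hy =>
      clear hyspan
      induction hy using Submodule.span_induction with
      | mem g hg =>
        obtain ⟨f, hfT, hf0, rfl⟩ := hg
        have hdecomp : a • inForm ω ε f =
            ∑ v ∈ a.support, (MvPolynomial.monomial v (a.coeff v)) • inForm ω ε f := by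
          conv_lhs => rw [MvPolynomial.as_sum a]
          rw [Finset.sum_smul]
        rw [hdecomp]
        apply Submodule.sum_mem
        intro v hv
        have hc0 : a.coeff v ≠ 0 := MvPolynomial.mem_support_iff.mp hv
        rw [← inForm_monomial_smul hc0 hf0 v]
        exact Submodule.subset_span
          ⟨(MvPolynomial.monomial v (a.coeff v)) • f, Submodule.smul_mem T _ hfT,
            monomial_smul_ne_zero hc0 hf0 v, rfl⟩
      | zero => rw [smul_zero]; exact Submodule.zero_mem _
      | add y z _ _ hy hz => rw [smul_add]; exact Submodule.add_mem _ hy hz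
      | smul c y _ hy =>
        rw [smul_comm]
        exact Submodule.smul_mem _ c hy
  · rw [Submodule.span_le]
    intro g hg
    obtain ⟨f, hfT, hf0, rfl⟩ := hg
    exact inForm_mem_inMod hfT hf0

theorem support_homogComp {d : Fin k → ℕ} {f : Fin k → A K n} {e : ℕ} {j : Fin k}
    {u : Fin n →₀ ℕ} (hu : u ∈ (homogComp d f e j).support) :
    u ∈ (f j).support ∧ tdeg u + d j = e := by
  rw [MvPolynomial.mem_support_iff, coeff_homogComp] at hu
  by_cases h : tdeg u + d j = e
  · rw [if_pos h] at hu; exact ⟨MvPolynomial.mem_support_iff.mpr hu, h⟩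
  · rw [if_neg h] at hu; exact absurd rfl hu

theorem homogComp_inForm (ω : Fin n → ℕ) (ε : Fin k → ℕ) (d : Fin k → ℕ) (e : ℕ)
    (f : Fin k → A K n) :
    homogComp d (inForm ω ε f) e = 0 ∨
      (homogComp d f e ≠ 0 ∧
        homogComp d (inForm ω ε f) e = inForm ω ε (homogComp d f e)) := by
  classical
  set fe := homogComp d f e with hfe
  have hsupp : ∀ j u, u ∈ (fe j).support → u ∈ (f j).support ∧ tdeg u + d j = e :=
    fun j u hu => support_homogComp hu
  have hwle : maxWt ω ε fe ≤ maxWt ω ε f :=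
    maxWt_le fun j u hu => le_maxWt (hsupp j u hu).1
  by_cases h1 : fe = 0
  · left
    funext j; apply MvPolynomial.ext; intro u
    rw [coeff_homogComp, coeff_inForm]
    show _ = (0 : A K n).coeff u
    rw [MvPolynomial.coeff_zero]
    split_ifs with hc1 hc2
    · have : (fe j).coeff u = (f j).coeff u := by rw [hfe, coeff_homogComp, if_pos hc1]
      rw [← this, h1]; rfl
    · rfl
    · rfl
  by_cases h2 : maxWt ω ε fe = maxWt ω ε f
  · right
    refine ⟨h1, ?_⟩
    funext j; apply MvPolynomial.ext; intro u
    rw [coeff_homogComp, coeff_inForm, coeff_inForm, hfe, coeff_homogComp, h2]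
    split_ifs <;> rfl
  · left
    have hwlt : maxWt ω ε fe < maxWt ω ε f := Nat.lt_of_le_of_ne hwle h2
    funext j; apply MvPolynomial.ext; intro u
    rw [coeff_homogComp, coeff_inForm]
    show _ = (0 : A K n).coeff u
    rw [MvPolynomial.coeff_zero]
    split_ifs with hc1 hc2
    · by_contra h0
      have hu : u ∈ (fe j).support := by
        rw [hfe, MvPolynomial.mem_support_iff, coeff_homogComp, if_pos hc1]
        intro hz; exact h0 (by rw [hz])
      have := le_maxWt (ω := ω) (ε := ε) hu
      omega
    · rfl
    · rfl

theorem deg_inMod {ω : Fin n → ℕ} {ε : Fin k → ℕ} {d : Fin k → ℕ}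
    {T : Submodule (A K n) (Fin k → A K n)} (hT : IsGradedSub d T) (e : ℕ) :
    deg d (inMod ω ε T) e = inSpanV ω ε (deg d T e) := by
  apply le_antisymm
  · rintro x ⟨hx1, hx2⟩
    have hx1' : x ∈ Submodule.span K {g | ∃ f ∈ T, f ≠ 0 ∧ g = inForm ω ε f} := by
      rw [← inMod_restrict]; exact hx1
    have key : ∀ y ∈ Submodule.span K {g | ∃ f ∈ T, f ≠ 0 ∧ g = inForm ω ε f},
        homogComp d y e ∈ inSpanV ω ε (deg d T e) := by
      intro y hy
      induction hy using Submodule.span_induction with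
      | mem g hg =>
        obtain ⟨f, hfT, hf0, rfl⟩ := hg
        rcases homogComp_inForm ω ε d e f with h | ⟨hne, heq⟩
        · rw [h]; exact Submodule.zero_mem _
        · rw [heq]
          exact Submodule.subset_span
            ⟨homogComp d f e, ⟨hT f hfT e, isHomog_homogComp d f e⟩, hne, rfl⟩
      | zero => rw [homogComp_zero]; exact Submodule.zero_mem _
      | add y z _ _ hy hz => rw [homogComp_add]; exact Submodule.add_mem _ hy hz
      | smul c y _ hy => rw [homogComp_smulK]; exact Submodule.smul_mem _ c hy
    have key' := key x hx1'
    rwa [homogComp_of_isHomog hx2] at key'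
  · rw [inSpanV, Submodule.span_le]
    rintro g ⟨f, ⟨hfT, hfh⟩, hf0, rfl⟩
    exact ⟨inForm_mem_inMod hfT hf0, isHomog_inForm hfh⟩

theorem wdeg_eq_sum_univ (ω : Fin n → ℕ) (u : Fin n →₀ ℕ) : wdeg ω u = ∑ i, ω i * u i := by
  rw [wdeg]; exact Finsupp.sum_fintype u (fun i e => ω i * e) (fun _ => by simp)

theorem wdeg_le_mul_tdeg (ω : Fin n → ℕ) (u : Fin n →₀ ℕ) :
    wdeg ω u ≤ (Finset.univ.sup ω) * tdeg u := by
  rw [wdeg_eq_sum_univ, tdeg_eq_sum_univ, Finset.mul_sum]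
  exact Finset.sum_le_sum fun i _ =>
    Nat.mul_le_mul_right (u i) (Finset.le_sup (Finset.mem_univ i))

/-- Hilbert functions are preserved by taking initial modules. -/
theorem hilb_inMod {ω : Fin n → ℕ} {ε : Fin k → ℕ} {d : Fin k → ℕ}
    {T : Submodule (A K n) (Fin k → A K n)} (hT : IsGradedSub d T) (e : ℕ) :
    hilb d (inMod ω ε T) e = hilb d T e := by
  rw [hilb_eq_finrank_deg, hilb_eq_finrank_deg, deg_inMod hT e]
  refine (core_finrank ω ε ((Finset.univ.sup ω) * e + Finset.univ.sup ε) (deg d T e)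
    inferInstance ?_).2
  rintro f ⟨-, hfh⟩ j u hu
  have h1 : tdeg u + d j = e := hfh j u hu
  have h2 := wdeg_le_mul_tdeg ω u
  have h3 : ε j ≤ Finset.univ.sup ε := Finset.le_sup (Finset.mem_univ j)
  have h4 : tdeg u ≤ e := by omega
  have h5 : (Finset.univ.sup ω) * tdeg u ≤ (Finset.univ.sup ω) * e :=
    Nat.mul_le_mul_left _ h4
  omega

end CregPaper

namespace CregPaper

open MvPolynomial Pointwise

variable {K : Type*} [Field K] {n k : ℕ}

/-- the `A`-linear map `A^m → F` with prescribed columns. -/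
noncomputable def colMap {m : ℕ} (t : Fin m → (Fin k → A K n)) :
    (Fin m → A K n) →ₗ[A K n] (Fin k → A K n) :=
  Fintype.linearCombination (A K n) t

theorem colMap_apply {m : ℕ} (t : Fin m → (Fin k → A K n)) (x : Fin m → A K n) :
    colMap t x = ∑ l, x l • t l := by
  simp [colMap, Fintype.linearCombination]

theorem colMap_single {m : ℕ} (t : Fin m → (Fin k → A K n)) (l : Fin m) :
    colMap t (Pi.single l 1) = t l := by
  simp [colMap, Fintype.linearCombination, Pi.single_apply]

theorem range_colMap {m : ℕ} (t : Fin m → (Fin k → A K n)) :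
    LinearMap.range (colMap t) = Submodule.span (A K n) (Set.range t) :=
  Fintype.range_linearCombination (A K n) t

theorem homogComp_apply_eq_pPart {m : ℕ} (δ : Fin m → ℕ) (x : Fin m → A K n) (e : ℕ)
    (l : Fin m) : homogComp δ x e l = pPart (x l) (δ l) e := by
  apply MvPolynomial.ext; intro u
  rw [coeff_homogComp, coeff_pPart]

theorem homogComp_sum {d : Fin k → ℕ} {ι : Type*} (s : Finset ι) (g : ι → (Fin k → A K n))
    (e : ℕ) : homogComp d (∑ i ∈ s, g i) e = ∑ i ∈ s, homogComp d (g i) e := by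
  classical
  induction s using Finset.induction with
  | empty => simp [homogComp_zero]
  | insert _ _ hi ih => rw [Finset.sum_insert hi, Finset.sum_insert hi, homogComp_add, ih]

theorem colMap_homogComp {m : ℕ} {δ : Fin m → ℕ} {d : Fin k → ℕ}
    {t : Fin m → (Fin k → A K n)} (ht : ∀ l, IsHomog d (δ l) (t l))
    (x : Fin m → A K n) (e : ℕ) :
    homogComp d (colMap t x) e = colMap t (homogComp δ x e) := by
  rw [colMap_apply, colMap_apply, homogComp_sum]
  refine Finset.sum_congr rfl fun l _ => ?_
  rw [homogComp_smul_of_isHomog (ht l), homogComp_apply_eq_pPart]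

theorem colMap_isHomog {m : ℕ} {δ : Fin m → ℕ} {d : Fin k → ℕ}
    {t : Fin m → (Fin k → A K n)} (ht : ∀ l, IsHomog d (δ l) (t l))
    {x : Fin m → A K n} {e : ℕ} (hx : IsHomog δ e x) : IsHomog d e (colMap t x) := by
  have h1 : homogComp d (colMap t x) e = colMap t x := by
    rw [colMap_homogComp ht, homogComp_of_isHomog hx]
  rw [← h1]
  exact isHomog_homogComp d _ e

theorem colMap_ker_graded {m : ℕ} {δ : Fin m → ℕ} {d : Fin k → ℕ}
    {t : Fin m → (Fin k → A K n)} (ht : ∀ l, IsHomog d (δ l) (t l)) :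
    IsGradedSub δ (LinearMap.ker (colMap t)) := by
  intro f hf e
  rw [LinearMap.mem_ker] at hf ⊢
  rw [← colMap_homogComp ht, hf, homogComp_zero]

theorem colMap_range_graded {m : ℕ} {δ : Fin m → ℕ} {d : Fin k → ℕ}
    {t : Fin m → (Fin k → A K n)} (ht : ∀ l, IsHomog d (δ l) (t l)) :
    IsGradedSub d (LinearMap.range (colMap t)) := by
  rintro f ⟨x, rfl⟩ e
  exact ⟨homogComp δ x e, (colMap_homogComp ht x e).symm⟩

/-- graded rank–nullity for a presentation with homogeneous columns. -/
theorem presentation_finrank {m : ℕ} {δ : Fin m → ℕ} {d : Fin k → ℕ}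
    {t : Fin m → (Fin k → A K n)} (ht : ∀ l, IsHomog d (δ l) (t l)) (e : ℕ) :
    Module.finrank K ↥(homogSub (K := K) (n := n) δ e) =
      Module.finrank K ↥(deg d (LinearMap.range (colMap t)) e) +
      Module.finrank K ↥(deg δ (LinearMap.ker (colMap t)) e) := by
  classical
  set ρ : ↥(homogSub (K := K) (n := n) δ e) →ₗ[K] (Fin k → A K n) :=
    ((colMap t).restrictScalars K).comp (homogSub δ e).subtype with hρ
  have hrange : LinearMap.range ρ = deg d (LinearMap.range (colMap t)) e := by
    apply le_antisymm
    · rintro y ⟨⟨x, hx⟩, rfl⟩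
      exact ⟨⟨x, rfl⟩, colMap_isHomog ht hx⟩
    · rintro y ⟨⟨x, rfl⟩, hy⟩
      refine ⟨⟨homogComp δ x e, isHomog_homogComp δ x e⟩, ?_⟩
      show colMap t (homogComp δ x e) = colMap t x
      rw [← colMap_homogComp ht, homogComp_of_isHomog hy]
  have hker : Submodule.map (homogSub δ e).subtype (LinearMap.ker ρ) =
      deg δ (LinearMap.ker (colMap t)) e := by
    apply le_antisymm
    · rintro x ⟨⟨y, hy⟩, hk, rfl⟩
      exact ⟨hk, hy⟩
    · rintro x ⟨hk, hx⟩
      exact ⟨⟨x, hx⟩, hk, rfl⟩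
  have hrn := LinearMap.finrank_range_add_finrank_ker ρ
  rw [hrange] at hrn
  rw [← hrn, ← hker, Submodule.finrank_map_subtype_eq]

theorem tdeg_eq_zero {u : Fin n →₀ ℕ} (h : tdeg u = 0) : u = 0 := by
  rw [tdeg_eq_sum_univ] at h
  ext i
  exact Finset.sum_eq_zero_iff.mp h i (Finset.mem_univ i)

theorem pPart_self_of_mem_mIdeal {p : A K n} (hp : p ∈ mIdeal K n) (c : ℕ) :
    pPart p c c = 0 := by
  apply MvPolynomial.ext; intro u
  rw [coeff_pPart, MvPolynomial.coeff_zero]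
  by_cases h : tdeg u + c = c
  · have : u = 0 := tdeg_eq_zero (by omega)
    rw [if_pos h, this]
    exact mem_mIdeal_iff.mp hp
  · rw [if_neg h]

theorem pPart_eq_zero_of_gt {p : A K n} {b c : ℕ} (h : c < b) : pPart p b c = 0 := by
  apply MvPolynomial.ext; intro u
  rw [coeff_pPart, MvPolynomial.coeff_zero, if_neg (by omega)]

/-- homogeneous degree-`c` elements of `m•T` lie in the span of products of
lower-degree homogeneous elements of `T` with complementary-degree polynomials. -/
theorem mem_low_of_mem_smul {d : Fin k → ℕ} {T : Submodule (A K n) (Fin k → A K n)}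
    (hT : IsGradedSub d T) {c : ℕ} {x : Fin k → A K n} (hx : x ∈ mIdeal K n • T)
    (hxh : IsHomog d c x) :
    x ∈ Submodule.span K {g | ∃ (p : A K n) (y : Fin k → A K n) (e : ℕ), y ∈ T ∧ IsHomog d e y ∧ e < c ∧
      (∀ u ∈ p.support, tdeg u + e = c) ∧ g = p • y} := by
  classical
  have main : homogComp d x c ∈ Submodule.span K {g | ∃ (p : A K n) (y : Fin k → A K n) (e : ℕ), y ∈ T ∧ IsHomog d e y ∧ e < c ∧
      (∀ u ∈ p.support, tdeg u + e = c) ∧ g = p • y} := by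
    refine Submodule.smul_induction_on hx ?_ ?_
    · intro p hp y hy
      obtain ⟨B, hB⟩ := exists_degBound d y
      have hdecomp : p • y = ∑ e ∈ Finset.range (B + 1), p • homogComp d y e := by
        rw [← Finset.smul_sum, sum_homogComp hB]
      rw [hdecomp, homogComp_sum]
      apply Submodule.sum_mem
      intro e he
      rw [homogComp_smul_of_isHomog (isHomog_homogComp d y e)]
      rcases Nat.lt_trichotomy e c with hec | hec | hec
      · apply Submodule.subset_span
        exact ⟨pPart p e c, homogComp d y e, e, hT y hy e, isHomog_homogComp d y e, hec,
          pPart_support p e c, rfl⟩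
      · subst hec
        rw [pPart_self_of_mem_mIdeal hp, zero_smul]
        exact Submodule.zero_mem _
      · rw [pPart_eq_zero_of_gt hec, zero_smul]
        exact Submodule.zero_mem _
    · intro x y hx hy
      rw [homogComp_add]
      exact Submodule.add_mem _ hx hy
  rwa [homogComp_of_isHomog hxh] at main

/-- in a free module with all shifts equal to `a` there are no nonzero
homogeneous elements of degree `< a`. -/
theorem isHomog_const_eq_zero {m : ℕ} {a e : ℕ} {y : Fin m → A K n}
    (hy : IsHomog (fun _ => a) e y) (he : e < a) : y = 0 := by
  funext l; apply MvPolynomial.ext; intro u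
  rw [Pi.zero_apply, MvPolynomial.coeff_zero]
  by_contra h0
  have h2 : tdeg u + a = e := hy l u (MvPolynomial.mem_support_iff.mpr fun hz => h0 (by rw [hz]))
  omega

end CregPaper

namespace CregPaper

open MvPolynomial Pointwise

variable {K : Type*} [Field K] {n k : ℕ}

/-- the terms of a polynomial of `ω`-weight `e - b`. -/
noncomputable def wPart (ω : Fin n → ℕ) (p : A K n) (b e : ℕ) : A K n :=
  ∑ v ∈ p.support.filter fun v => wdeg ω v + b = e, MvPolynomial.monomial v (p.coeff v)

theorem coeff_wPart (ω : Fin n → ℕ) (p : A K n) (b e : ℕ) (v : Fin n →₀ ℕ) :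
    (wPart ω p b e).coeff v = if wdeg ω v + b = e then p.coeff v else 0 := by
  classical
  unfold wPart
  rw [MvPolynomial.coeff_sum]
  simp only [MvPolynomial.coeff_monomial]
  rw [Finset.sum_ite_eq' _ v (fun w => p.coeff w)]
  simp only [Finset.mem_filter, MvPolynomial.mem_support_iff]
  by_cases h : wdeg ω v + b = e
  · by_cases h0 : p.coeff v = 0 <;> simp [h, h0]
  · simp [h]

theorem wtComp_apply_eq_wPart {m : ℕ} (ω : Fin n → ℕ) (ε0 : Fin m → ℕ) (W : ℕ)
    (x : Fin m → A K n) (l : Fin m) :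
    wtComp ω ε0 W x l = wPart ω (x l) (ε0 l) W := by
  apply MvPolynomial.ext; intro v
  rw [coeff_wtComp, coeff_wPart]

theorem wtComp_zero (ω : Fin n → ℕ) (ε : Fin k → ℕ) (w : ℕ) :
    wtComp ω ε w (0 : Fin k → A K n) = 0 :=
  map_zero (wtCompₗ ω ε w)

/-- the key exchange identity: the weight-`W` part of `q • f` is the matching
part of `q` times the initial form of `f`, provided no term can exceed `W`. -/
theorem wtComp_smul (ω : Fin n → ℕ) (ε : Fin k → ℕ) {q : A K n} {f : Fin k → A K n}
    {W : ℕ} (hq : ∀ v ∈ q.support, wdeg ω v + maxWt ω ε f ≤ W) :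
    wtComp ω ε W (q • f) = wPart ω q (maxWt ω ε f) W • inForm ω ε f := by
  classical
  set b := maxWt ω ε f with hb
  funext j; apply MvPolynomial.ext; intro u
  rw [coeff_wtComp]
  have hL : ((q • f) j).coeff u = ∑ x ∈ Finset.HasAntidiagonal.antidiagonal u, q.coeff x.1 * (f j).coeff x.2 :=
    MvPolynomial.coeff_mul q (f j) u
  have hR : ((wPart ω q b W • inForm ω ε f) j).coeff u =
      ∑ x ∈ Finset.HasAntidiagonal.antidiagonal u,
        (if wdeg ω x.1 + b = W then q.coeff x.1 else 0) *
        (if wdeg ω x.2 + ε j = b then (f j).coeff x.2 else 0) := by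
    rw [show ((wPart ω q b W • inForm ω ε f) j) = wPart ω q b W * inForm ω ε f j from rfl,
      MvPolynomial.coeff_mul]
    exact Finset.sum_congr rfl fun x _ => by rw [coeff_wPart, coeff_inForm]
  rw [hR]
  by_cases h : wdeg ω u + ε j = W
  · rw [if_pos h, hL]
    refine Finset.sum_congr rfl fun x hx => ?_
    by_cases h1 : q.coeff x.1 = 0
    · simp [h1]
    by_cases h2 : (f j).coeff x.2 = 0
    · simp [h2]
    have hc1 := hq x.1 (MvPolynomial.mem_support_iff.mpr h1)
    have hc2 := le_maxWt (ω := ω) (ε := ε) (MvPolynomial.mem_support_iff.mpr h2)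
    have hu : x.1 + x.2 = u := Finset.HasAntidiagonal.mem_antidiagonal.mp hx
    have hw : wdeg ω u = wdeg ω x.1 + wdeg ω x.2 := by rw [← hu, wdeg_add]
    rw [if_pos (by omega), if_pos (by omega)]
  · rw [if_neg h]
    refine (Finset.sum_eq_zero fun x hx => ?_).symm
    by_cases h1 : q.coeff x.1 = 0
    · simp [h1]
    by_cases h2 : (f j).coeff x.2 = 0
    · simp [h2]
    have hu : x.1 + x.2 = u := Finset.HasAntidiagonal.mem_antidiagonal.mp hx
    have hw : wdeg ω u = wdeg ω x.1 + wdeg ω x.2 := by rw [← hu, wdeg_add]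
    by_cases hcc : wdeg ω x.1 + b = W ∧ wdeg ω x.2 + ε j = b
    · exact absurd (by omega) h
    rcases not_and_or.mp hcc with hc | hc
    · rw [if_neg hc, zero_mul]
    · rw [if_neg hc, mul_zero]

/-- initial forms of relations among the `f l` are relations among the
initial forms `inForm (f l)`. -/
theorem inForm_relation {m : ℕ} (ω : Fin n → ℕ) (ε : Fin k → ℕ)
    (f : Fin m → (Fin k → A K n)) (x : Fin m → A K n)
    (hx : colMap f x = 0) :
    colMap (fun l => inForm ω ε (f l)) (inForm ω (fun l => maxWt ω ε (f l)) x) = 0 := by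
  classical
  set ε0 : Fin m → ℕ := fun l => maxWt ω ε (f l) with hε0
  set W := maxWt ω ε0 x with hW
  have hbound : ∀ l, ∀ v ∈ (x l).support, wdeg ω v + ε0 l ≤ W :=
    fun l v hv => le_maxWt hv
  have key : wtComp ω ε W (colMap f x) =
      colMap (fun l => inForm ω ε (f l)) (wtComp ω ε0 W x) := by
    rw [colMap_apply, colMap_apply]
    rw [show wtComp ω ε W (∑ l, x l • f l) = (wtCompₗ ω ε W) (∑ l, x l • f l) from rfl,
      map_sum]
    refine Finset.sum_congr rfl fun l _ => ?_
    rw [show (wtCompₗ ω ε W) (x l • f l) = wtComp ω ε W (x l • f l) from rfl,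
      wtComp_smul ω ε (fun v hv => hbound l v hv), wtComp_apply_eq_wPart]
  rw [inForm_eq_wtComp, ← hW, ← key, hx, wtComp_zero]

end CregPaper

namespace CregPaper

open MvPolynomial Pointwise

variable {K : Type*} [Field K] {n k : ℕ}

noncomputable def degBound {m : ℕ} (δ : Fin m → ℕ) (f : Fin m → A K n) : ℕ :=
  Finset.univ.sup fun j => ((f j).support.sup tdeg) + δ j

theorem le_degBound {m : ℕ} (δ : Fin m → ℕ) (f : Fin m → A K n) :
    ∀ j, ∀ u ∈ (f j).support, tdeg u + δ j ≤ degBound δ f := fun j u hu =>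
  le_trans (add_le_add_left (Finset.le_sup hu) (δ j))
    (Finset.le_sup (f := fun j => ((f j).support.sup tdeg) + δ j) (Finset.mem_univ j))

theorem exists_homog_gens {m : ℕ} (δ : Fin m → ℕ) (T : Submodule (A K n) (Fin m → A K n))
    (hT : IsGradedSub δ T) :
    ∃ (s : ℕ) (δ' : Fin s → ℕ) (t : Fin s → (Fin m → A K n)),
      (∀ l, t l ∈ T) ∧ (∀ l, IsHomog δ (δ' l) (t l)) ∧
      Submodule.span (A K n) (Set.range t) = T := by
  classical
  haveI : IsNoetherianRing (A K n) := by infer_instance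
  have hfg : T.FG := IsNoetherian.noetherian T
  obtain ⟨G, hG⟩ := hfg
  set B := G.sup (degBound δ) with hB
  let ι := {y // y ∈ G} × Fin (B + 1)
  let eqv : Fin (Fintype.card ι) ≃ ι := (Fintype.equivFin ι).symm
  refine ⟨Fintype.card ι, fun l => ((eqv l).2 : ℕ),
    fun l => homogComp δ ((eqv l).1 : Fin m → A K n) ((eqv l).2 : ℕ), ?_, ?_, ?_⟩
  · intro l
    have hy : ((eqv l).1 : Fin m → A K n) ∈ T := by
      rw [← hG]; exact Submodule.subset_span (eqv l).1.2
    exact hT _ hy _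
  · intro l; exact isHomog_homogComp δ _ _
  · apply le_antisymm
    · rw [Submodule.span_le]
      rintro x ⟨l, rfl⟩
      have hy : ((eqv l).1 : Fin m → A K n) ∈ T := by
        rw [← hG]; exact Submodule.subset_span (eqv l).1.2
      exact hT _ hy _
    · rw [← hG, Submodule.span_le]
      intro y hy
      have hyB : ∀ j, ∀ u ∈ (y j).support, tdeg u + δ j ≤ B := fun j u hu =>
        le_trans (le_degBound δ y j u hu) (Finset.le_sup hy)
      have hdec : y = ∑ e ∈ Finset.range (B + 1), homogComp δ y e := (sum_homogComp hyB).symm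
      rw [hdec]
      apply Submodule.sum_mem
      intro e he
      apply Submodule.subset_span
      refine ⟨eqv.symm ⟨⟨y, hy⟩, ⟨e, Finset.mem_range.mp he⟩⟩, ?_⟩
      simp

theorem exists_min_gens {m : ℕ} (δ : Fin m → ℕ) (T : Submodule (A K n) (Fin m → A K n))
    (hT : IsGradedSub δ T) :
    ∃ (s : ℕ) (δ' : Fin s → ℕ) (t : Fin s → (Fin m → A K n)),
      (∀ l, t l ∈ T) ∧ (∀ l, IsHomog δ (δ' l) (t l)) ∧
      Submodule.span (A K n) (Set.range t) = T ∧
      ∀ l, t l ∉ Submodule.span (A K n) (t '' {l' | l' ≠ l}) := by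
  classical
  obtain ⟨s, δ', t, h1, h2, h3⟩ := exists_homog_gens δ T hT
  clear hT
  induction s using Nat.strong_induction_on with
  | _ s ih =>
    by_cases hirr : ∀ l, t l ∉ Submodule.span (A K n) (t '' {l' | l' ≠ l})
    · exact ⟨s, δ', t, h1, h2, h3, hirr⟩
    · push_neg at hirr
      obtain ⟨l0, hl0⟩ := hirr
      rcases s with _ | s'
      · exact Fin.elim0 l0
      · refine ih s' (Nat.lt_succ_self s') (δ' ∘ l0.succAbove) (t ∘ l0.succAbove)
          (fun l => h1 _) (fun l => h2 _) ?_
        have hrange : Set.range (t ∘ l0.succAbove) = t '' {l0}ᶜ := by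
          rw [Set.range_comp, Fin.range_succAbove]
        have hins : Set.range t = insert (t l0) (t '' {l0}ᶜ) := by
          ext x
          constructor
          · rintro ⟨l, rfl⟩
            rcases eq_or_ne l l0 with rfl | hne
            · exact Set.mem_insert _ _
            · exact Set.mem_insert_of_mem _ ⟨l, hne, rfl⟩
          · rintro (rfl | ⟨l, -, rfl⟩) <;> exact ⟨_, rfl⟩
        have hcompl : ({l0}ᶜ : Set (Fin (s' + 1))) = {l' | l' ≠ l0} := by
          ext l'; simp
        rw [hrange, ← h3, hins, hcompl]
        exact (Submodule.span_insert_eq_span (hcompl ▸ hl0)).symm ▸ rfl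

theorem eq_C_of_tdeg_eq_zero {p : A K n} (h : ∀ u ∈ p.support, tdeg u = 0) :
    p = MvPolynomial.C (p.coeff 0) := by
  apply MvPolynomial.ext; intro u
  rw [MvPolynomial.coeff_C]
  rcases eq_or_ne u 0 with rfl | hu
  · simp
  · rw [if_neg (fun hc => hu hc.symm)]
    by_contra h0
    exact hu (tdeg_eq_zero (h u (MvPolynomial.mem_support_iff.mpr h0)))

theorem pPart_self_eq_C (p : A K n) (c : ℕ) : pPart p c c = MvPolynomial.C (p.coeff 0) := by
  apply MvPolynomial.ext; intro u
  rw [coeff_pPart, MvPolynomial.coeff_C]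
  rcases eq_or_ne u 0 with rfl | hu
  · rw [if_pos (by rw [tdeg_zero, zero_add]), if_pos rfl]
  · rw [if_neg (fun hc => hu (tdeg_eq_zero (by omega))), if_neg (fun hc => hu hc.symm)]

/-- entries of relations among irredundant homogeneous generators lie in `m`. -/
theorem ker_mentries {m s : ℕ} {δ : Fin m → ℕ} {δ' : Fin s → ℕ}
    {t : Fin s → (Fin m → A K n)} (hth : ∀ l, IsHomog δ (δ' l) (t l))
    (hirr : ∀ l, t l ∉ Submodule.span (A K n) (t '' {l' | l' ≠ l})) :
    ∀ y ∈ LinearMap.ker (colMap t), ∀ l, y l ∈ mIdeal K n := by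
  classical
  have hom_case : ∀ e, ∀ y ∈ LinearMap.ker (colMap t), IsHomog δ' e y →
      ∀ l, y l ∈ mIdeal K n := by
    intro e y hy hyh l
    rw [mem_mIdeal_iff]
    by_contra hc0
    have h0supp : (0 : Fin n →₀ ℕ) ∈ (y l).support := MvPolynomial.mem_support_iff.mpr hc0
    have he : e = δ' l := by
      have := hyh l 0 h0supp; rw [tdeg_zero] at this; omega
    have hconst : y l = MvPolynomial.C ((y l).coeff 0) := by
      apply eq_C_of_tdeg_eq_zero
      intro u hu
      have := hyh l u hu; omega
    set c := (y l).coeff 0 with hc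
    have hrel : ∑ j, y j • t j = 0 := by rw [← colMap_apply]; exact hy
    have hsplit : y l • t l + ∑ j ∈ Finset.univ.erase l, y j • t j = 0 := by
      rw [← hrel]
      exact Finset.add_sum_erase Finset.univ (fun j => y j • t j) (Finset.mem_univ l)
    have heq : (MvPolynomial.C c : A K n) • t l = - ∑ j ∈ Finset.univ.erase l, y j • t j := by
      rw [← hconst]; exact eq_neg_of_add_eq_zero_left hsplit
    have htl : t l = (MvPolynomial.C (-c⁻¹) : A K n) • ∑ j ∈ Finset.univ.erase l, y j • t j := by
      have h2 : (MvPolynomial.C (c⁻¹) : A K n) • ((MvPolynomial.C c : A K n) • t l) = t l := by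
        rw [smul_smul, ← MvPolynomial.C_mul, inv_mul_cancel₀ hc0, MvPolynomial.C_1, one_smul]
      rw [← h2, heq, smul_neg, ← neg_smul, ← MvPolynomial.C_neg]
    apply hirr l
    rw [htl]
    apply Submodule.smul_mem
    apply Submodule.sum_mem
    intro j hj
    apply Submodule.smul_mem
    exact Submodule.subset_span ⟨j, Finset.mem_erase.mp hj |>.1, rfl⟩
  intro y hy l
  obtain ⟨B, hB⟩ := exists_degBound δ' y
  have hdec : y = ∑ e ∈ Finset.range (B + 1), homogComp δ' y e := (sum_homogComp hB).symm
  have hyl : y l = ∑ e ∈ Finset.range (B + 1), homogComp δ' y e l := by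
    conv_lhs => rw [hdec]
    rw [Finset.sum_apply]
  rw [hyl]
  apply Ideal.sum_mem
  intro e he
  exact hom_case e _ (colMap_ker_graded hth y hy e) (isHomog_homogComp δ' y e) l

/-- an A-independent choice from a K-linearly independent homogeneous family. -/
theorem irr_of_linearIndependent {β : ℕ} {d : Fin k → ℕ} {a : ℕ}
    {g : Fin β → (Fin k → A K n)} (hh : ∀ l, IsHomog d a (g l))
    (hli : LinearIndependent K g) :
    ∀ l, g l ∉ Submodule.span (A K n) (g '' {l' | l' ≠ l}) := by
  classical
  intro l hmem
  rcases β with _ | β'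
  · exact Fin.elim0 l
  have hrange : g '' {l' | l' ≠ l} = Set.range (g ∘ l.succAbove) := by
    rw [Set.range_comp, Fin.range_succAbove]
    congr 1
  rw [hrange, ← range_colMap] at hmem
  obtain ⟨x, hx⟩ := hmem
  have hcols : ∀ j, IsHomog d ((fun _ => a) j) ((g ∘ l.succAbove) j) := fun j => hh _
  have hkey : g l = colMap (g ∘ l.succAbove) (homogComp (fun _ => a) x a) := by
    rw [← colMap_homogComp hcols, hx, homogComp_of_isHomog (hh l)]
  have hKspan : g l ∈ Submodule.span K (g '' {l' | l' ≠ l}) := by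
    rw [hkey, colMap_apply]
    apply Submodule.sum_mem
    intro j hj
    rw [homogComp_apply_eq_pPart, pPart_self_eq_C]
    have : (MvPolynomial.C ((x j).coeff 0) : A K n) • (g ∘ l.succAbove) j =
        ((x j).coeff 0) • (g ∘ l.succAbove) j := by
      rw [← algebraMap_smul (A K n) ((x j).coeff 0) ((g ∘ l.succAbove) j)]
      rfl
    rw [this]
    apply Submodule.smul_mem
    apply Submodule.subset_span
    exact ⟨l.succAbove j, Fin.succAbove_ne l j, rfl⟩
  exact hli.notMem_span_image (by simp : l ∉ {l' | l' ≠ l}) hKspan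

end CregPaper

namespace CregPaper

open MvPolynomial Pointwise

variable {K : Type*} [Field K] {n k : ℕ}

/-- a stage of the minimal resolution construction. -/
structure Stage (K : Type*) [Field K] (n : ℕ) where
  m : ℕ
  δ : Fin m → ℕ
  T : Submodule (A K n) (Fin m → A K n)
  graded : IsGradedSub δ T
  ment : ∀ y ∈ T, ∀ l, y l ∈ mIdeal K n

/-- a minimal homogeneous generating family for the module of a stage. -/
structure Gens {K : Type*} [Field K] {n : ℕ} (s : Stage K n) where
  num : ℕ
  degs : Fin num → ℕ
  cols : Fin num → (Fin s.m → A K n)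
  mem : ∀ l, cols l ∈ s.T
  homog : ∀ l, IsHomog s.δ (degs l) (cols l)
  span_eq : Submodule.span (A K n) (Set.range cols) = s.T
  irr : ∀ l, cols l ∉ Submodule.span (A K n) (cols '' {l' | l' ≠ l})

noncomputable def Stage.pick (s : Stage K n) : Gens s := Classical.choice <| by
  obtain ⟨s', δ', t, h1, h2, h3, h4⟩ := exists_min_gens s.δ s.T s.graded
  exact ⟨⟨s', δ', t, h1, h2, h3, h4⟩⟩

noncomputable def Stage.next (s : Stage K n) : Stage K n where
  m := s.pick.num
  δ := s.pick.degs
  T := LinearMap.ker (colMap s.pick.cols)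
  graded := colMap_ker_graded s.pick.homog
  ment := ker_mentries s.pick.homog s.pick.irr

noncomputable def Stage.map (s : Stage K n) :
    (Fin s.next.m → A K n) →ₗ[A K n] (Fin s.m → A K n) := colMap s.pick.cols

theorem Stage.map_range (s : Stage K n) : LinearMap.range s.map = s.T := by
  have h := s.pick.span_eq; rw [← range_colMap] at h; exact h

theorem Stage.next_T (s : Stage K n) : s.next.T = LinearMap.ker s.map := rfl

theorem Stage.map_hom (s : Stage K n) (l : Fin s.next.m) :
    IsHomog s.δ (s.next.δ l) (s.map (Pi.single l 1)) := by
  have h := s.pick.homog l; rw [← colMap_single s.pick.cols l] at h; exact h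

theorem Stage.map_ment (s : Stage K n) (x : Fin s.next.m → A K n) (l : Fin s.m) :
    s.map x l ∈ mIdeal K n := by
  have hx : s.map x ∈ s.T := by
    rw [← s.map_range]; exact ⟨x, rfl⟩
  exact s.ment _ hx l

noncomputable def chain (s0 : Stage K n) : ℕ → Stage K n
  | 0 => s0
  | i + 1 => (chain s0 i).next

/-- existence of a minimal graded free resolution of the span of a linearly
independent homogeneous family, together with a minimal generating family of
the first syzygy module. -/
theorem exists_min_res {d : Fin k → ℕ} {β a : ℕ} (g : Fin β → (Fin k → A K n))
    (hg : ∀ l, IsHomog d a (g l)) (hli : LinearIndependent K g) :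
    ∃ res : GFRes d (Submodule.span (A K n) (Set.range g)), res.Minimal ∧
      res.rk 0 = β ∧
      ∃ (t : Fin (res.rk 1) → (Fin β → A K n)),
        (∀ l, t l ∈ LinearMap.ker (colMap g)) ∧
        (∀ l, IsHomog (fun _ => a) (res.sh 1 l) (t l)) ∧
        Submodule.span (A K n) (Set.range t) = LinearMap.ker (colMap g) := by
  classical
  have hker_ment : ∀ y ∈ LinearMap.ker (colMap g), ∀ l, y l ∈ mIdeal K n :=
    ker_mentries (fun l => hg l) (irr_of_linearIndependent hg hli)
  set s0 : Stage K n :=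
    ⟨β, fun _ => a, LinearMap.ker (colMap g), colMap_ker_graded (fun l => hg l), hker_ment⟩
    with hs0
  refine ⟨{ rk := fun i => (chain s0 i).m
            sh := fun i => (chain s0 i).δ
            aug := colMap g
            diff := fun i => (chain s0 i).map
            aug_range := range_colMap g
            aug_hom := fun l => by have h := hg l; rw [← colMap_single g l] at h; exact h
            diff_hom := fun i l => (chain s0 i).map_hom l
            ex0 := (chain s0 0).map_range
            exs := fun i => (chain s0 (i + 1)).map_range }, ?_, rfl, ?_⟩
  · intro i x l
    exact (chain s0 i).map_ment x l
  · refine ⟨s0.pick.cols, s0.pick.mem, s0.pick.homog, s0.pick.span_eq⟩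

end CregPaper

namespace CregPaper

open MvPolynomial Pointwise

variable {K : Type*} [Field K] {n k : ℕ}

theorem isHomog_unique {d : Fin k → ℕ} {y : Fin k → A K n} {b b' : ℕ}
    (hy : y ≠ 0) (h1 : IsHomog d b y) (h2 : IsHomog d b' y) : b = b' := by
  obtain ⟨j, u, hu, -⟩ := exists_max_term (ω := fun _ => 0) (ε := fun _ => 0) hy
  have e1 := h1 j u hu
  have e2 := h2 j u hu
  omega

theorem inMod_graded {ω : Fin n → ℕ} {ε : Fin k → ℕ} {d : Fin k → ℕ}
    {M : Submodule (A K n) (Fin k → A K n)} (hM : IsGradedSub d M) :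
    IsGradedSub d (inMod ω ε M) := by
  intro f hf e
  have hf' : f ∈ Submodule.span K {g | ∃ f ∈ M, f ≠ 0 ∧ g = inForm ω ε f} := by
    rw [← inMod_restrict]; exact hf
  have key : ∀ y ∈ Submodule.span K {g | ∃ f ∈ M, f ≠ 0 ∧ g = inForm ω ε f},
      homogComp d y e ∈ Submodule.restrictScalars K (inMod ω ε M) := by
    intro y hy
    induction hy using Submodule.span_induction with
    | mem g hg =>
      obtain ⟨f, hfM, hf0, rfl⟩ := hg
      rcases homogComp_inForm ω ε d e f with h | ⟨hne, heq⟩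
      · rw [h]; exact Submodule.zero_mem _
      · rw [heq]; exact inForm_mem_inMod (hM f hfM e) hne
    | zero => rw [homogComp_zero]; exact Submodule.zero_mem _
    | add y z _ _ hy hz => rw [homogComp_add]; exact Submodule.add_mem _ hy hz
    | smul c y _ hy => rw [homogComp_smulK]; exact Submodule.smul_mem _ c hy
  exact key f hf'

theorem sum_pPart0 (p : A K n) :
    p = ∑ q ∈ Finset.range (p.support.sup tdeg + 1), pPart p 0 q := by
  classical
  apply MvPolynomial.ext; intro u
  rw [MvPolynomial.coeff_sum]
  simp only [coeff_pPart, add_zero]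
  rw [Finset.sum_ite_eq (Finset.range (p.support.sup tdeg + 1)) (tdeg u)
    (fun _ => p.coeff u)]
  by_cases hu : p.coeff u = 0
  · simp [hu]
  · have : tdeg u ∈ Finset.range (p.support.sup tdeg + 1) :=
      Finset.mem_range.mpr (Nat.lt_succ_of_le
        (Finset.le_sup (MvPolynomial.mem_support_iff.mpr hu)))
    simp [this]

theorem phomog_pPart0 (p : A K n) (q : ℕ) : PHomog (pPart p 0 q) q := by
  intro u hu
  have := pPart_support p 0 q u hu
  omega

theorem homogComp_phomog_smul {d : Fin k → ℕ} {p : A K n} {q : ℕ} (hp : PHomog p q)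
    (x : Fin k → A K n) (e : ℕ) :
    homogComp d (p • x) e = if q ≤ e then p • homogComp d x (e - q) else 0 := by
  classical
  funext j; apply MvPolynomial.ext; intro u
  rw [coeff_homogComp]
  have hL : ((p • x) j).coeff u = ∑ y ∈ Finset.HasAntidiagonal.antidiagonal u, p.coeff y.1 * (x j).coeff y.2 :=
    MvPolynomial.coeff_mul p (x j) u
  by_cases hqe : q ≤ e
  · rw [if_pos hqe]
    have hR : ((p • homogComp d x (e - q)) j).coeff u =
        ∑ y ∈ Finset.HasAntidiagonal.antidiagonal u,
          p.coeff y.1 * (if tdeg y.2 + d j = e - q then (x j).coeff y.2 else 0) := by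
      rw [show ((p • homogComp d x (e - q)) j) = p * homogComp d x (e - q) j from rfl,
        MvPolynomial.coeff_mul]
      exact Finset.sum_congr rfl fun y _ => by rw [coeff_homogComp]
    rw [hR]
    by_cases h : tdeg u + d j = e
    · rw [if_pos h, hL]
      refine Finset.sum_congr rfl fun y hy => ?_
      by_cases h1 : p.coeff y.1 = 0
      · simp [h1]
      have hq1 : tdeg y.1 = q := hp y.1 (MvPolynomial.mem_support_iff.mpr h1)
      have hu : y.1 + y.2 = u := Finset.HasAntidiagonal.mem_antidiagonal.mp hy
      have htd : tdeg u = tdeg y.1 + tdeg y.2 := by rw [← hu, tdeg_add]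
      rw [if_pos (by omega)]
    · rw [if_neg h]
      refine (Finset.sum_eq_zero fun y hy => ?_).symm
      by_cases h1 : p.coeff y.1 = 0
      · simp [h1]
      have hq1 : tdeg y.1 = q := hp y.1 (MvPolynomial.mem_support_iff.mpr h1)
      have hu : y.1 + y.2 = u := Finset.HasAntidiagonal.mem_antidiagonal.mp hy
      have htd : tdeg u = tdeg y.1 + tdeg y.2 := by rw [← hu, tdeg_add]
      rw [if_neg (by omega), mul_zero]
  · rw [if_neg hqe]
    show _ = (0 : A K n).coeff u
    rw [MvPolynomial.coeff_zero]
    by_cases h : tdeg u + d j = e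
    · rw [if_pos h, hL]
      refine Finset.sum_eq_zero fun y hy => ?_
      by_cases h1 : p.coeff y.1 = 0
      · simp [h1]
      have hq1 : tdeg y.1 = q := hp y.1 (MvPolynomial.mem_support_iff.mpr h1)
      have hu : y.1 + y.2 = u := Finset.HasAntidiagonal.mem_antidiagonal.mp hy
      have htd : tdeg u = tdeg y.1 + tdeg y.2 := by rw [← hu, tdeg_add]
      omega
    · rw [if_neg h]

/-- product set for graded decompositions of spans. -/
def prodSet (d : Fin k → ℕ) (G : Set (Fin k → A K n)) (e : ℕ) : Set (Fin k → A K n) :=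
  {h | ∃ (p : A K n) (y : Fin k → A K n) (b : ℕ), y ∈ G ∧ IsHomog d b y ∧
    (∀ u ∈ p.support, tdeg u + b = e) ∧ h = p • y}

theorem homogComp_mem_span_prodSet {d : Fin k → ℕ} {G : Set (Fin k → A K n)}
    (hG : ∀ g ∈ G, ∃ b, IsHomog d b g) :
    ∀ x ∈ Submodule.span (A K n) G, ∀ e,
      homogComp d x e ∈ Submodule.span K (prodSet d G e) := by
  classical
  intro x hx
  induction hx using Submodule.span_induction with
  | mem g hg =>
    intro e
    obtain ⟨b, hb⟩ := hG g hg
    rcases eq_or_ne e b with rfl | hne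
    · rw [homogComp_of_isHomog hb]
      apply Submodule.subset_span
      refine ⟨MvPolynomial.C 1, g, e, hg, hb, ?_, by rw [MvPolynomial.C_1, one_smul]⟩
      intro u hu
      have : u = 0 := by
        have hsupp : u ∈ (MvPolynomial.C (1:K) : A K n).support := hu
        rw [show (MvPolynomial.C (1:K) : A K n) = MvPolynomial.monomial 0 1 from rfl,
          MvPolynomial.support_monomial] at hsupp
        simpa using hsupp
      rw [this, tdeg_zero, zero_add]
    · rw [homogComp_of_isHomog_ne hb hne]
      exact Submodule.zero_mem _
  | zero => intro e; rw [homogComp_zero]; exact Submodule.zero_mem _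
  | add y z _ _ hy hz => intro e; rw [homogComp_add]; exact Submodule.add_mem _ (hy e) (hz e)
  | smul p y hyspan hy =>
    intro e
    have hdec : p • y = ∑ q ∈ Finset.range (p.support.sup tdeg + 1), pPart p 0 q • y := by
      conv_lhs => rw [sum_pPart0 p]
      rw [Finset.sum_smul]
    rw [hdec, homogComp_sum]
    apply Submodule.sum_mem
    intro q hq
    rw [homogComp_phomog_smul (phomog_pPart0 p q)]
    by_cases hqe : q ≤ e
    · rw [if_pos hqe]
      -- pPart p 0 q • (span K (prodSet d G (e - q))) ⊆ span K (prodSet d G e)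
      have hmem := hy (e - q)
      have key : ∀ z ∈ Submodule.span K (prodSet d G (e - q)),
          pPart p 0 q • z ∈ Submodule.span K (prodSet d G e) := by
        intro z hz
        induction hz using Submodule.span_induction with
        | mem h hh =>
          obtain ⟨p', y', b, hy', hb', hp', rfl⟩ := hh
          rw [smul_smul]
          apply Submodule.subset_span
          refine ⟨pPart p 0 q * p', y', b, hy', hb', ?_, rfl⟩
          intro u hu
          have := MvPolynomial.support_mul (pPart p 0 q) p' hu
          rcases Finset.mem_add.mp this with ⟨v, hv, w, hw, rfl⟩
          have h1 : tdeg v = q := phomog_pPart0 p q v hv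
          have h2 : tdeg w + b = e - q := hp' w hw
          rw [tdeg_add]
          omega
        | zero => rw [smul_zero]; exact Submodule.zero_mem _
        | add w w' _ _ hw hw' => rw [smul_add]; exact Submodule.add_mem _ hw hw'
        | smul c w _ hw => rw [smul_comm]; exact Submodule.smul_mem _ c hw
      exact key _ hmem
    · rw [if_neg hqe]; exact Submodule.zero_mem _

theorem compSub_le (d : Fin k → ℕ) (T : Submodule (A K n) (Fin k → A K n)) (a : ℕ) :
    compSub d T a ≤ T := by
  rw [compSub, Submodule.span_le]
  rintro f ⟨hf, -⟩
  exact hf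

theorem smul_mem_compSub {d : Fin k → ℕ} {T : Submodule (A K n) (Fin k → A K n)}
    {a b e : ℕ} {y : Fin k → A K n} (hy : y ∈ T) (hyh : IsHomog d b y)
    (hba : b ≤ a) (hae : a ≤ e) {p : A K n} (hp : ∀ u ∈ p.support, tdeg u + b = e) :
    p • y ∈ compSub d T a := by
  classical
  have hdec : p • y = ∑ v ∈ p.support, (MvPolynomial.monomial v (p.coeff v)) • y := by
    conv_lhs => rw [MvPolynomial.as_sum p]
    rw [Finset.sum_smul]
  rw [hdec]
  apply Submodule.sum_mem
  intro v hv
  have htv : tdeg v + b = e := hp v hv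
  obtain ⟨v2, hv2le, hv2⟩ := exists_le_tdeg (u := v) (m := a - b) (by omega)
  have hsplit : (v - v2) + v2 = v := tsub_add_cancel_of_le hv2le
  have hmono : (MvPolynomial.monomial v (p.coeff v) : A K n) =
      MvPolynomial.monomial (v - v2) (p.coeff v) * MvPolynomial.monomial v2 1 := by
    rw [MvPolynomial.monomial_mul, mul_one, hsplit]
  rw [hmono, mul_smul]
  apply Submodule.smul_mem
  apply Submodule.subset_span
  have hph : PHomog (MvPolynomial.monomial v2 (1:K)) (a - b) := by
    intro u hu
    rw [MvPolynomial.support_monomial, if_neg (one_ne_zero)] at hu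
    rw [Finset.mem_singleton.mp hu, hv2]
  have hh := isHomog_smul hph hyh
  rw [Nat.sub_add_cancel hba] at hh
  exact ⟨Submodule.smul_mem T _ hy, hh⟩

theorem deg_compSub_of_genLE {d : Fin k → ℕ} {M : Submodule (A K n) (Fin k → A K n)}
    {a : ℕ} (hgen : GenInDegLE d M a) {e : ℕ} (hae : a ≤ e) :
    deg d (compSub d M a) e = deg d M e := by
  apply le_antisymm
  · exact inf_le_inf_right _ ((compSub_le d M a) : _)
  · rintro x ⟨hxM, hxh⟩
    refine ⟨?_, hxh⟩
    have hG : ∀ g ∈ {f | f ∈ M ∧ ∃ b ≤ a, IsHomog d b f}, ∃ b, IsHomog d b g :=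
      fun g hg => ⟨hg.2.choose, hg.2.choose_spec.2⟩
    have hx : x ∈ Submodule.span (A K n) {f | f ∈ M ∧ ∃ b ≤ a, IsHomog d b f} := hgen hxM
    have hmem := homogComp_mem_span_prodSet hG x hx e
    rw [homogComp_of_isHomog hxh] at hmem
    have hle : Submodule.span K (prodSet d {f | f ∈ M ∧ ∃ b ≤ a, IsHomog d b f} e) ≤
        Submodule.restrictScalars K (compSub d M a) := by
      rw [Submodule.span_le]
      rintro h ⟨p, y, b, ⟨hyM, b', hb'a, hb'⟩, hb, hps, rfl⟩
      rcases eq_or_ne y 0 with rfl | hy0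
      · rw [smul_zero]; exact Submodule.zero_mem _
      · have hbb : b = b' := isHomog_unique hy0 hb hb'
        subst hbb
        exact smul_mem_compSub hyM hb (le_trans (le_refl b) hb'a) hae hps
    exact hle hmem

theorem deg_smul_eq_of_beta0 {d : Fin k → ℕ} {M : Submodule (A K n) (Fin k → A K n)}
    {b : ℕ} (h : beta0 d M b = 0) :
    deg d (mIdeal K n • M) b = deg d M b := by
  apply Submodule.eq_of_le_of_finrank_le
  · exact inf_le_inf_right _ ((Submodule.smul_le_right) : _)
  · exact Nat.sub_eq_zero_iff_le.mp h

end CregPaper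

namespace CregPaper

open MvPolynomial Pointwise

variable {K : Type*} [Field K] {n k : ℕ}

theorem exists_adapted_basis (ω : Fin n → ℕ) (ε d : Fin k → ℕ)
    {M : Submodule (A K n) (Fin k → A K n)} (hM : IsGradedSub d M) (a : ℕ) :
    ∃ (β : ℕ) (f g : Fin β → (Fin k → A K n)),
      (∀ l, f l ∈ M) ∧ (∀ l, IsHomog d a (f l)) ∧ (∀ l, f l ≠ 0) ∧
      (∀ l, g l = inForm ω ε (f l)) ∧
      LinearIndependent K g ∧
      Submodule.span K (Set.range g) = deg d (inMod ω ε M) a := by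
  classical
  set genSet : Set (Fin k → A K n) :=
    {g | ∃ f, f ∈ deg d M a ∧ f ≠ 0 ∧ g = inForm ω ε f} with hgenSet
  have hP : deg d (inMod ω ε M) a = Submodule.span K genSet := deg_inMod hM a
  obtain ⟨b, hbsub, hbspan, hbli⟩ := exists_linearIndependent K genSet
  have hbP : b ⊆ ↑(deg d (inMod ω ε M) a) := by
    intro x hx
    rw [hP]
    exact Submodule.subset_span (hbsub hx)
  -- b is finite
  have hfinb : b.Finite := by
    set P := deg d (inMod ω ε M) a
    let emb : ↥b → ↥P := fun x => ⟨↑x, hbP x.2⟩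
    have hemb : LinearIndependent K emb := by
      apply LinearIndependent.of_comp P.subtype
      exact hbli
    have : Finite ↥b := hemb.finite
    exact Set.toFinite b
  haveI : Fintype ↥b := hfinb.fintype
  set β := Fintype.card ↥b with hβ
  let eqv : Fin β ≃ ↥b := (Fintype.equivFin ↥b).symm
  set g : Fin β → (Fin k → A K n) := fun l => ↑(eqv l) with hg
  have hgli : LinearIndependent K g := by
    have := hbli.comp eqv eqv.injective
    exact this
  have hrange : Set.range g = b := by
    rw [hg]
    have : Set.range (fun l => (↑(eqv l) : Fin k → A K n)) =
        Subtype.val '' Set.range eqv := by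
      rw [← Set.range_comp]; rfl
    rw [this, Equiv.range_eq_univ, Set.image_univ, Subtype.range_coe]
  have hgspan : Submodule.span K (Set.range g) = deg d (inMod ω ε M) a := by
    rw [hrange, hbspan, hP]
  have hmemgen : ∀ l, g l ∈ genSet := fun l => hbsub (eqv l).2
  choose f hf1 hf2 hf3 using hmemgen
  exact ⟨β, f, g, fun l => (hf1 l).1, fun l => (hf1 l).2, hf2, hf3, hgli, hgspan⟩

theorem f_linearIndependent {β : ℕ} (ω : Fin n → ℕ) (ε : Fin k → ℕ)
    {f g : Fin β → (Fin k → A K n)} (hgf : ∀ l, g l = inForm ω ε (f l))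
    (hgli : LinearIndependent K g) : LinearIndependent K f := by
  classical
  rw [Fintype.linearIndependent_iff]
  intro c hc
  by_contra hcon
  push_neg at hcon
  obtain ⟨i, hi⟩ := hcon
  set x : Fin β → A K n := fun l => MvPolynomial.C (c l) with hx
  have hx0 : x ≠ 0 := by
    intro hz
    apply hi
    have : (x i).coeff 0 = 0 := by rw [hz]; rfl
    rwa [hx, MvPolynomial.coeff_C, if_pos rfl] at this
  have hcolf : colMap f x = 0 := by
    rw [colMap_apply]
    rw [← hc]
    refine Finset.sum_congr rfl fun l _ => ?_
    rw [hx, ← algebraMap_smul (A K n) (c l) (f l)]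
    rfl
  have hrel := inForm_relation ω ε f x hcolf
  set ε0 : Fin β → ℕ := fun l => maxWt ω ε (f l) with hε0
  set z := inForm ω (fun l => maxWt ω ε (f l)) x with hz
  have hz0 : z ≠ 0 := inForm_ne_zero hx0
  have hzconst : ∀ l, z l = MvPolynomial.C ((z l).coeff 0) := by
    intro l
    apply eq_C_of_tdeg_eq_zero
    intro u hu
    have hsup := (support_inForm (f := x) (j := l) hu).1
    have : u ∈ (MvPolynomial.monomial (0 : Fin n →₀ ℕ) (c l)).support := hsup
    rw [MvPolynomial.support_monomial] at this
    by_cases hc0 : c l = 0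
    · rw [if_pos hc0] at this; exact absurd this (Finset.notMem_empty u)
    · rw [if_neg hc0] at this
      rw [Finset.mem_singleton.mp this, tdeg_zero]
  have hgrel : ∑ l, ((z l).coeff 0) • g l = 0 := by
    have h1 : colMap (fun l => inForm ω ε (f l)) z = 0 := hrel
    rw [colMap_apply] at h1
    rw [← h1]
    refine Finset.sum_congr rfl fun l _ => ?_
    rw [hgf l, ← algebraMap_smul (A K n) ((z l).coeff 0) (inForm ω ε (f l))]
    conv_rhs => rw [hzconst l]
    rfl
  have hall := Fintype.linearIndependent_iff.mp hgli _ hgrel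
  apply hz0
  funext l
  rw [hzconst l, hall l, MvPolynomial.C_0]
  rfl

theorem compSub_eq_span_range {d : Fin k → ℕ} {T : Submodule (A K n) (Fin k → A K n)}
    {a : ℕ} {β : ℕ} {v : Fin β → (Fin k → A K n)}
    (h : Submodule.span K (Set.range v) = deg d T a) :
    compSub d T a = Submodule.span (A K n) (Set.range v) := by
  have hset : {f | f ∈ T ∧ IsHomog d a f} = (deg d T a : Set (Fin k → A K n)) := by
    ext f
    constructor
    · rintro ⟨h1, h2⟩; exact ⟨h1, h2⟩
    · rintro ⟨h1, h2⟩; exact ⟨h1, h2⟩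
  rw [compSub, hset, ← h]
  exact Submodule.span_span_of_tower (R := K) (S := A K n) (Set.range v)

end CregPaper


namespace CregPaper

/-- **strengthened crystallization, Remark after Theorem 5.2.**
Let `M ⊆ F` be generated in degrees `≤ a` and let `r` be such that
`β_{1,d+1}((in_{(ω,ε)}(M))_{⟨a⟩}) = 0` for all `d > a + r` (read off from any
minimal graded free resolution).  If `in_{(ω,ε)}(M)` has no minimal generators
in degrees `a+1, …, a+1+r`, then `in_{(ω,ε)}(M)` is generated in degrees `≤ a`. -/
theorem crystallization_strengthened
    {K : Type*} [Field K] {n k : ℕ} (ω : Fin n → ℕ) (d ε : Fin k → ℕ)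
    (M : Submodule (A K n) (Fin k → A K n)) (hM : IsGradedSub d M)
    (a r : ℕ)
    (hgen : GenInDegLE d M a)
    (hsyz : ∀ res : GFRes d (compSub d (inMod ω ε M) a), res.Minimal →
      ∀ b, a + r < b → ∀ l : Fin (res.rk 1), res.sh 1 l ≠ b + 1)
    (hnogens : ∀ b, a + 1 ≤ b → b ≤ a + 1 + r → beta0 d (inMod ω ε M) b = 0) :
    GenInDegLE d (inMod ω ε M) a := by
  classical
  set N := inMod ω ε M with hNdef
  have hNgr : IsGradedSub d N := inMod_graded hM
  obtain ⟨β, f, g, hfM, hfh, hf0, hgf, hgli, hgspan⟩ := exists_adapted_basis ω ε d hM a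
  have hfli : LinearIndependent K f := f_linearIndependent ω ε hgf hgli
  have hgh : ∀ l, IsHomog d a (g l) := fun l => by
    rw [hgf l]; exact isHomog_inForm (hfh l)
  have hL : compSub d N a = Submodule.span (A K n) (Set.range g) :=
    compSub_eq_span_range hgspan
  have hfsub : Submodule.span K (Set.range f) ≤ deg d M a := by
    rw [Submodule.span_le]; rintro x ⟨l, rfl⟩; exact ⟨hfM l, hfh l⟩
  have hfspan : Submodule.span K (Set.range f) = deg d M a := by
    apply Submodule.eq_of_le_of_finrank_le hfsub
    have h1 : Module.finrank K ↥(deg d N a) = Module.finrank K ↥(deg d M a) :=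
      hilb_inMod hM a
    have h2 : Module.finrank K ↥(deg d N a) = β := by
      rw [← hgspan, finrank_span_eq_card hgli, Fintype.card_fin]
    have h3 : Module.finrank K ↥(Submodule.span K (Set.range f)) = β := by
      rw [finrank_span_eq_card hfli, Fintype.card_fin]
    omega
  have hM' : compSub d M a = Submodule.span (A K n) (Set.range f) :=
    compSub_eq_span_range hfspan
  set δ0 : Fin β → ℕ := fun _ => a with hδ0
  set S' := LinearMap.ker (colMap f) with hS'def
  set S := LinearMap.ker (colMap g) with hSdef
  have hfcols : ∀ l, IsHomog d (δ0 l) (f l) := fun l => hfh l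
  have hgcols : ∀ l, IsHomog d (δ0 l) (g l) := fun l => hgh l
  have hS'gr : IsGradedSub δ0 S' := colMap_ker_graded hfcols
  have hSgr : IsGradedSub δ0 S := colMap_ker_graded hgcols
  have hrangef : LinearMap.range (colMap f) = compSub d M a := by
    rw [range_colMap, hM']
  have hrangeg : LinearMap.range (colMap g) = compSub d N a := by
    rw [range_colMap, hL]
  set ε0 : Fin β → ℕ := fun l => maxWt ω ε (f l) with hε0
  have hinS' : inMod ω ε0 S' ≤ S := by
    rw [inMod, Submodule.span_le]
    rintro x ⟨s, hsS', hs0, rfl⟩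
    have hrel := inForm_relation ω ε f s hsS'
    show inForm ω ε0 s ∈ S
    rw [hSdef, LinearMap.mem_ker]
    have hgeq : (fun l => inForm ω ε (f l)) = g := funext fun l => (hgf l).symm
    rw [← hgeq]
    exact hrel
  obtain ⟨res0, hmin0, hrk0, t, htmem, hth, htspan⟩ := exists_min_res g hgh hgli
  rw [hL] at hsyz
  have hsyz0 := hsyz res0 hmin0
  -- the main induction
  have main : ∀ c, a ≤ c → deg d N c ≤ Submodule.restrictScalars K (compSub d N a) := by
    intro c
    induction c using Nat.strong_induction_on with
    | _ c ih =>
      intro hac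
      rcases Nat.eq_or_lt_of_le hac with rfl | hlt
      · rintro x ⟨hx1, hx2⟩
        exact Submodule.subset_span ⟨hx1, hx2⟩
      have step : deg d N c ≤ deg d (mIdeal K n • N) c →
          deg d N c ≤ Submodule.restrictScalars K (compSub d N a) := by
        intro hNc x hx
        have hx2 : IsHomog d c x := hx.2
        have hxm : x ∈ mIdeal K n • N := (hNc hx).1
        have hlow := mem_low_of_mem_smul hNgr hxm hx2
        refine Submodule.span_le.mpr ?_ hlow
        rintro h ⟨p, y, e, hyN, hyh, hec, hps, rfl⟩
        rcases Nat.lt_or_ge e a with hea | hea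
        · show p • y ∈ compSub d N a
          exact smul_mem_compSub hyN hyh (le_of_lt hea) hac hps
        · have hyL : y ∈ compSub d N a := ih e hec hea ⟨hyN, hyh⟩
          show p • y ∈ compSub d N a
          exact Submodule.smul_mem _ p hyL
      by_cases hcsmall : c ≤ a + 1 + r
      · apply step
        rw [deg_smul_eq_of_beta0 (hnogens c hlt hcsmall)]
      · push_neg at hcsmall
        -- piece equalities in lower degrees
        have hpieces : ∀ e, a ≤ e → e < c →
            deg δ0 S e = deg δ0 (inMod ω ε0 S') e := by
          intro e hae hec
          have hlowle : deg δ0 (inMod ω ε0 S') e ≤ deg δ0 S e :=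
            inf_le_inf_right _ (hinS' : _)
          refine (Submodule.eq_of_le_of_finrank_le hlowle ?_).symm
          have e1 := presentation_finrank hfcols e
          have e2 := presentation_finrank hgcols e
          rw [hrangef] at e1
          rw [hrangeg] at e2
          rw [← hS'def] at e1
          rw [← hSdef] at e2
          have e3 : Module.finrank K ↥(deg d (compSub d M a) e) =
              Module.finrank K ↥(deg d M e) := by
            rw [deg_compSub_of_genLE hgen hae]
          have e4 : Module.finrank K ↥(deg d N e) = Module.finrank K ↥(deg d M e) :=
            hilb_inMod hM e
          have e5 : deg d (compSub d N a) e = deg d N e := by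
            apply le_antisymm
            · exact inf_le_inf_right _ ((compSub_le d N a) : _)
            · rintro x ⟨hx1, hx2⟩
              exact ⟨ih e hec hae ⟨hx1, hx2⟩, hx2⟩
          have e5' : Module.finrank K ↥(deg d (compSub d N a) e) =
              Module.finrank K ↥(deg d N e) := by rw [e5]
          have e6 : Module.finrank K ↥(deg δ0 (inMod ω ε0 S') e) =
              Module.finrank K ↥(deg δ0 S' e) := hilb_inMod hS'gr e
          omega
        -- no generators of S in degree c
        have hnogen_c : ∀ l, res0.sh 1 l ≠ c := by
          intro l
          have h2 := hsyz0 (c - 1) (by omega) l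
          rwa [Nat.sub_add_cancel (by omega : 1 ≤ c)] at h2
        have hSc_m : deg δ0 S c ≤ deg δ0 (mIdeal K n • S) c := by
          rintro x ⟨hx1, hx2⟩
          refine ⟨?_, hx2⟩
          have hx1' : x ∈ LinearMap.range (colMap t) := by
            rw [range_colMap, htspan]; exact hx1
          obtain ⟨y, hy⟩ := hx1'
          have hxc : x = colMap t (homogComp (res0.sh 1) y c) := by
            rw [← colMap_homogComp hth, hy, homogComp_of_isHomog hx2]
          rw [hxc, colMap_apply]
          apply Submodule.sum_mem
          intro l _
          rw [homogComp_apply_eq_pPart]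
          exact Submodule.smul_mem_smul (M := Fin β → A K n) (I := mIdeal K n) (N := S)
            (pPart_mem_mIdeal (hnogen_c l)) (htmem l)
        have hSc_in : deg δ0 S c ≤ deg δ0 (inMod ω ε0 S') c := by
          rintro x hx
          have hx2 : IsHomog δ0 c x := hx.2
          have hxm : x ∈ mIdeal K n • S := (hSc_m hx).1
          refine ⟨?_, hx2⟩
          have hlow := mem_low_of_mem_smul hSgr hxm hx2
          refine Submodule.span_le.mpr ?_ hlow
          rintro h ⟨p, y, e, hyS, hyh, hec, hps, rfl⟩
          rcases Nat.lt_or_ge e a with hea | hea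
          · rw [isHomog_const_eq_zero hyh hea, smul_zero]
            exact Submodule.zero_mem _
          · have hy' : y ∈ deg δ0 (inMod ω ε0 S') e := by
              rw [← hpieces e hea hec]; exact ⟨hyS, hyh⟩
            show p • y ∈ inMod ω ε0 S'
            exact Submodule.smul_mem _ p hy'.1
        -- dimension count at degree c
        have hc1 := presentation_finrank hfcols c
        have hc2 := presentation_finrank hgcols c
        rw [hrangef] at hc1
        rw [hrangeg] at hc2
        rw [← hS'def] at hc1
        rw [← hSdef] at hc2
        have hc3 : Module.finrank K ↥(deg d (compSub d M a) c) =
            Module.finrank K ↥(deg d M c) := by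
          rw [deg_compSub_of_genLE hgen hac]
        have hc4 : Module.finrank K ↥(deg d N c) = Module.finrank K ↥(deg d M c) :=
          hilb_inMod hM c
        have hc5 : Module.finrank K ↥(deg δ0 (inMod ω ε0 S') c) =
            Module.finrank K ↥(deg δ0 S' c) := hilb_inMod hS'gr c
        have hc6 : Module.finrank K ↥(deg δ0 S c) ≤
            Module.finrank K ↥(deg δ0 (inMod ω ε0 S') c) :=
          Submodule.finrank_mono hSc_in
        have hfinal : Module.finrank K ↥(deg d N c) ≤
            Module.finrank K ↥(deg d (compSub d N a) c) := by omega
        have heqc : deg d (compSub d N a) c = deg d N c :=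
          Submodule.eq_of_le_of_finrank_le
            (inf_le_inf_right _ ((compSub_le d N a) : _)) hfinal
        rw [← heqc]
        exact inf_le_left
  -- conclude
  intro x hx
  obtain ⟨B, hB⟩ := exists_degBound d x
  have hdec : x = ∑ e ∈ Finset.range (B + 1), homogComp d x e := (sum_homogComp hB).symm
  rw [hdec]
  apply Submodule.sum_mem
  intro e he
  rcases Nat.lt_or_ge a e with hae | hea
  · have hmem : homogComp d x e ∈ compSub d N a :=
      main e (le_of_lt hae) ⟨hNgr x hx e, isHomog_homogComp d x e⟩
    have hle : compSub d N a ≤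
        Submodule.span (A K n) {f | f ∈ N ∧ ∃ b ≤ a, IsHomog d b f} := by
      rw [compSub]
      apply Submodule.span_mono
      rintro h ⟨h1, h2⟩
      exact ⟨h1, a, le_refl a, h2⟩
    exact hle hmem
  · apply Submodule.subset_span
    exact ⟨hNgr x hx e, e, hea, isHomog_homogComp d x e⟩

end CregPaper
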